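/- arXiv:2105.04378 — 2 statements merged into one kernel-verified Lean document; each statement's English description precedes it below -/
import Mathlib

section
/- Fix 2 ≤ d ≤ k ≤ n − k, a prime power q, and 2 ≤ S ≤ [n choose k]_q. Let b be the size of the injection ball of radius d−1 in G_q(k,n). Then the proportion of subsets C ⊆ G_q(k,n) with |C| = S and minimum injection distance ≥ d, among all subsets of G_q(k,n) of size S, is at least 1 − (b−1)·S·(S−1) / (2·([n choose k]_q − 1)). -/
/-- The `q`-binomial (Gaussian) coefficient `[m choose l]_q`. -/
def qbin (q : ℕ) : ℕ → ℕ → ℕ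
  | _, 0 => 1
  | 0, _ + 1 => 0
  | m + 1, l + 1 => qbin q m l + q ^ (l + 1) * qbin q m (l + 1)

/-- The size of the ball of radius `d - 1` in the injection metric on `G_q(k,n)`. -/
def injBallSize (q n k d : ℕ) : ℕ :=
  ∑ i ∈ Finset.range d, q ^ (i ^ 2) * qbin q k i * qbin q (n - k) i

/-- The density of subspace codes in `G_q(k,n)` of cardinality `S` and minimum injection
distance at least `d`, among all subsets of `G_q(k,n)` of cardinality `S`. -/
noncomputable def densityI (F : Type) [Field F] [Fintype F] (n k S d : ℕ) : ℝ :=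
  (Nat.card {C : Set (Submodule F (Fin n → F)) //
      (∀ X ∈ C, Module.finrank F X = k) ∧ C.ncard = S ∧
      ∀ X ∈ C, ∀ Y ∈ C, X ≠ Y → d ≤ k - Module.finrank F ↥(X ⊓ Y)} : ℝ) /
  (Nat.card {C : Set (Submodule F (Fin n → F)) //
      (∀ X ∈ C, Module.finrank F X = k) ∧ C.ncard = S} : ℝ)

set_option linter.unusedSectionVars false



open Finset in
lemma prod_shift (q m l : ℕ) :
    ∏ i ∈ range (l+1), ((q:ℤ)^(m+1) - q^i)
      = ((q:ℤ)^(m+1) - 1) * q^l * ∏ i ∈ range l, ((q:ℤ)^m - q^i) := by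
  rw [Finset.prod_range_succ']
  have : ∀ i ∈ range l, ((q:ℤ)^(m+1) - q^(i+1)) = q * ((q:ℤ)^m - q^i) := by
    intro i _; ring
  rw [Finset.prod_congr rfl this, Finset.prod_mul_distrib, Finset.prod_const,
    Finset.card_range]
  ring

open Finset in
lemma qbin_mul_int (q : ℕ) : ∀ n k : ℕ,
    (qbin q n k : ℤ) * ∏ i ∈ range k, ((q:ℤ)^k - q^i)
      = ∏ i ∈ range k, ((q:ℤ)^n - q^i) := by
  intro n
  induction n with
  | zero =>
    intro k
    match k with
    | 0 => simp [qbin]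
    | l + 1 =>
      rw [show qbin q 0 (l+1) = 0 from rfl]
      push_cast
      rw [zero_mul]
      symm
      apply Finset.prod_eq_zero (Finset.mem_range.2 (Nat.succ_pos l))
      norm_num
  | succ n ih =>
    intro k
    match k with
    | 0 => simp [qbin]
    | l + 1 =>
      rw [show qbin q (n+1) (l+1) = qbin q n l + q ^ (l + 1) * qbin q n (l+1) from rfl]
      rw [prod_shift q l l, prod_shift q n l]
      push_cast
      have hA := ih l
      have hB := ih (l+1)
      rw [prod_shift q l l] at hB
      calc ((qbin q n l : ℤ) + q ^ (l + 1) * qbin q n (l+1)) *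
            (((q:ℤ)^(l+1) - 1) * q^l * ∏ i ∈ range l, ((q:ℤ)^l - q^i))
          = ((qbin q n l : ℤ) * ∏ i ∈ range l, ((q:ℤ)^l - q^i)) * (((q:ℤ)^(l+1) - 1) * q^l)
            + (q:ℤ) ^ (l + 1) * ((qbin q n (l+1) : ℤ) *
              (((q:ℤ)^(l+1) - 1) * q^l * ∏ i ∈ range l, ((q:ℤ)^l - q^i))) := by ring
        _ = (∏ i ∈ range l, ((q:ℤ)^n - q^i)) * (((q:ℤ)^(l+1) - 1) * q^l)
            + (q:ℤ) ^ (l + 1) * ∏ i ∈ range (l+1), ((q:ℤ)^n - q^i) := by rw [hA, hB]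
        _ = ((q:ℤ)^(n+1) - 1) * q^l * ∏ i ∈ range l, ((q:ℤ)^n - q^i) := by
            rw [Finset.prod_range_succ]; ring



noncomputable section
open Finset

def ffZ (q n k : ℕ) : ℤ := ∏ i ∈ range k, ((q:ℤ)^n - q^i)
def PZ (q k : ℕ) : ℤ := ∏ j ∈ range k, ((q:ℤ)^(j+1) - 1)

lemma ffZ_pos {q : ℕ} (hq : 2 ≤ q) {n k : ℕ} (h : k ≤ n) : 0 < ffZ q n k := by
  apply Finset.prod_pos
  intro i hi
  have hi' : i < n := lt_of_lt_of_le (Finset.mem_range.1 hi) h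
  have : (q:ℤ)^i < (q:ℤ)^n := by
    apply pow_lt_pow_right₀ (by exact_mod_cast hq.trans_lt' one_lt_two) hi'
  linarith

lemma PZ_pos {q : ℕ} (hq : 2 ≤ q) (k : ℕ) : 0 < PZ q k := by
  apply Finset.prod_pos
  intro j _
  have : (1:ℤ) < (q:ℤ)^(j+1) := by
    apply one_lt_pow₀ (by exact_mod_cast hq.trans_lt' one_lt_two) (Nat.succ_ne_zero j)
  linarith

lemma ffZ_P (q : ℕ) : ∀ k n : ℕ, k ≤ n →
    ffZ q n k * PZ q (n - k) = (q:ℤ)^(∑ j ∈ range k, j) * PZ q n := by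
  intro k
  induction k with
  | zero => intro n _; simp [ffZ, PZ]
  | succ k ih =>
    intro n hkn
    have hk : k < n := hkn
    have h1 : ffZ q n (k+1) = ffZ q n k * ((q:ℤ)^n - q^k) := Finset.prod_range_succ _ _
    have h2 : PZ q (n - k) = PZ q (n - (k+1)) * ((q:ℤ)^(n-k) - 1) := by
      have e : n - k = (n - (k+1)) + 1 := by omega
      rw [e, PZ, Finset.prod_range_succ, ← PZ, ← e]
    have h3 : ((q:ℤ)^n - q^k) = (q:ℤ)^k * ((q:ℤ)^(n-k) - 1) := by
      rw [mul_sub, mul_one, ← pow_add]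
      congr 2
      omega
    have h4 : (∑ j ∈ range (k+1), j) = (∑ j ∈ range k, j) + k := Finset.sum_range_succ _ _
    have := ih n hk.le
    rw [h1, h3, h4, pow_add]
    rw [h2] at this
    linear_combination (q:ℤ)^k * this

lemma qbin_mul_ffZ (q n k : ℕ) : (qbin q n k : ℤ) * ffZ q k k = ffZ q n k :=
  qbin_mul_int q n k

lemma qbin_pos {q : ℕ} (hq : 2 ≤ q) {n k : ℕ} (h : k ≤ n) : 0 < qbin q n k := by
  have h1 := qbin_mul_ffZ q n k
  have h2 := ffZ_pos hq (le_refl k)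
  have h3 := ffZ_pos hq h
  by_contra hc
  push_neg at hc
  interval_cases h' : qbin q n k
  simp [h'] at h1
  rw [← h1] at h3
  exact lt_irrefl _ h3

lemma qbin_symm {q : ℕ} (hq : 2 ≤ q) {k i : ℕ} (h : i ≤ k) :
    qbin q k (k - i) = qbin q k i := by
  have key : ∀ j : ℕ, j ≤ k → ffZ q k j * (ffZ q (k-j) (k-j) * PZ q 0) =
      (q:ℤ)^((∑ t ∈ range j, t) + (∑ t ∈ range (k-j), t)) * PZ q k := by
    intro j hj
    have h1 := ffZ_P q j k hj
    have h2 := ffZ_P q (k-j) (k-j) (le_refl _)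
    rw [Nat.sub_self] at h2
    calc ffZ q k j * (ffZ q (k-j) (k-j) * PZ q 0)
        = (ffZ q (k-j) (k-j) * PZ q 0) * ffZ q k j := by ring
      _ = ((q:ℤ)^(∑ t ∈ range (k-j), t) * PZ q (k-j)) * ffZ q k j := by rw [h2]
      _ = (q:ℤ)^(∑ t ∈ range (k-j), t) * (ffZ q k j * PZ q (k-j)) := by ring
      _ = (q:ℤ)^(∑ t ∈ range (k-j), t) * ((q:ℤ)^(∑ t ∈ range j, t) * PZ q k) := by rw [ffZ_P q j k hj]
      _ = (q:ℤ)^((∑ t ∈ range j, t) + (∑ t ∈ range (k-j), t)) * PZ q k := by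
          rw [pow_add]; ring
  have k1 := key i h
  have k2 := key (k - i) (Nat.sub_le _ _)
  rw [Nat.sub_sub_self h] at k2
  rw [add_comm (∑ t ∈ range (k-i), t)] at k2
  -- now ffZ q k i * (ffZ q (k-i) (k-i) * PZ q 0) = ffZ q k (k-i) * (ffZ q i i * PZ q 0)
  have heq : ffZ q k i * ffZ q (k-i) (k-i) = ffZ q k (k-i) * ffZ q i i := by
    have : PZ q 0 = 1 := by simp [PZ]
    rw [this, mul_one] at k1 k2
    rw [k1, k2]
  -- use qbin_mul
  have m1 := qbin_mul_ffZ q k i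
  have m2 := qbin_mul_ffZ q k (k-i)
  have hpos : 0 < ffZ q i i * ffZ q (k-i) (k-i) :=
    mul_pos (ffZ_pos hq (le_refl i)) (ffZ_pos hq (le_refl _))
  have : (qbin q k (k-i) : ℤ) * (ffZ q i i * ffZ q (k-i) (k-i))
       = (qbin q k i : ℤ) * (ffZ q i i * ffZ q (k-i) (k-i)) := by
    calc (qbin q k (k-i) : ℤ) * (ffZ q i i * ffZ q (k-i) (k-i))
        = ((qbin q k (k-i) : ℤ) * ffZ q (k-i) (k-i)) * ffZ q i i := by ring
      _ = ffZ q k (k-i) * ffZ q i i := by rw [m2]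
      _ = ffZ q k i * ffZ q (k-i) (k-i) := heq.symm
      _ = ((qbin q k i : ℤ) * ffZ q i i) * ffZ q (k-i) (k-i) := by rw [m1]
      _ = (qbin q k i : ℤ) * (ffZ q i i * ffZ q (k-i) (k-i)) := by ring
  have := mul_right_cancel₀ (ne_of_gt hpos) this
  exact_mod_cast this

section P3

open Finset Module LinearMap

variable {F : Type} [Field F] [Fintype F]
variable {V : Type} [AddCommGroup V] [Module F V] [Finite V]
variable {W : Type} [AddCommGroup W] [Module F W] [Finite W]

local notation "q" => Fintype.card F

/-- L1: number of linearly independent `j`-tuples. -/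
lemma card_indep (j : ℕ) (hj : j ≤ finrank F V) :
    Nat.card {s : Fin j → V // LinearIndependent F s}
      = ∏ t ∈ range j, (q ^ (finrank F V) - q ^ t) := by
  rw [card_linearIndependent hj]
  rw [← Fin.prod_univ_eq_prod_range]

/-- The equivalence underlying L2. -/
noncomputable def indepCompEquiv (φ : V →ₗ[F] W) (j : ℕ) :
    {w : Fin j → V // LinearIndependent F (⇑φ ∘ w)}
      ≃ {s : Fin j → LinearMap.range φ // LinearIndependent F s} × (Fin j → LinearMap.ker φ) := by
  classical
  have hsur : LinearMap.range φ.rangeRestrict = ⊤ := LinearMap.range_rangeRestrict φ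
  choose σ hσ using φ.rangeRestrict.exists_rightInverse_of_surjective hsur
  have hσ' : ∀ y : LinearMap.range φ, φ.rangeRestrict (σ y) = y := fun y => by
    have := congrArg (fun f => f y) hσ; exact this
  have hφσ : ∀ y : LinearMap.range φ, φ (σ y) = (y : W) := fun y => by
    have := congrArg Subtype.val (hσ' y); simpa using this
  refine
  { toFun := fun w =>
      (⟨⇑φ.rangeRestrict ∘ w.1, ?_⟩,
        fun t => ⟨w.1 t - σ (φ.rangeRestrict (w.1 t)), ?_⟩)
    invFun := fun p => ⟨fun t => σ (p.1.1 t) + (p.2 t).1, ?_⟩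
    left_inv := ?_
    right_inv := ?_ }
  · -- independence of rangeRestrict ∘ w
    apply LinearIndependent.of_comp (LinearMap.range φ).subtype
    convert w.2 using 1
    funext t; rfl
  · -- membership in ker
    rw [LinearMap.mem_ker, map_sub, hφσ]
    simp
  · -- independence of invFun
    have : ⇑φ ∘ (fun t => σ (p.1.1 t) + (p.2 t).1)
        = fun t => ((p.1.1 t : W)) := by
      funext t
      simp only [Function.comp_apply, map_add, hφσ]
      have : φ (p.2 t).1 = 0 := (p.2 t).2
      rw [this, add_zero]
    rw [this]
    exact p.1.2.map' (LinearMap.range φ).subtype (Submodule.ker_subtype _)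
  · intro w
    apply Subtype.ext
    funext t
    simp
  · intro p
    refine Prod.ext ?_ ?_
    · apply Subtype.ext
      funext t
      apply Subtype.ext
      simp only [Function.comp_apply, map_add, hσ']
      have : φ.rangeRestrict (p.2 t).1 = 0 := by
        rw [← LinearMap.mem_ker, LinearMap.ker_rangeRestrict]
        exact (p.2 t).2
      rw [this, add_zero]
    · funext t
      apply Subtype.ext
      simp only [map_add, hσ']
      have : φ.rangeRestrict (p.2 t).1 = 0 := by
        rw [← LinearMap.mem_ker, LinearMap.ker_rangeRestrict]
        exact (p.2 t).2
      rw [this, map_zero, add_zero]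
      exact add_sub_cancel_left _ _

/-- L2: number of tuples with linearly independent image. -/
lemma card_indep_comp (φ : V →ₗ[F] W) (j : ℕ) (hj : j ≤ finrank F (LinearMap.range φ)) :
    Nat.card {w : Fin j → V // LinearIndependent F (⇑φ ∘ w)}
      = q ^ (finrank F (LinearMap.ker φ) * j) *
        ∏ t ∈ range j, (q ^ (finrank F (LinearMap.range φ)) - q ^ t) := by
  rw [Nat.card_congr (indepCompEquiv φ j)]
  rw [Nat.card_prod, card_indep j hj]
  have : Nat.card (Fin j → LinearMap.ker φ) = q ^ (finrank F (LinearMap.ker φ) * j) := by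
    cases nonempty_fintype (LinearMap.ker φ)
    have : Nat.card (LinearMap.ker φ) = q ^ finrank F (LinearMap.ker φ) := by
      rw [Nat.card_eq_fintype_card, card_eq_pow_finrank (K := F)]
    rw [Nat.card_fun, this, ← pow_mul, Nat.card_eq_fintype_card, Fintype.card_fin]
  rw [this]
  ring

end P3

section P4

open Finset Module LinearMap

variable {F : Type} [Field F] [Fintype F]
variable {V : Type} [AddCommGroup V] [Module F V] [Finite V]

local notation "q" => Fintype.card F

lemma nat_card_eq_card_mul {α β : Type*} [Finite α] [Finite β] (p : α → β) (c : ℕ)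
    (h : ∀ b : β, Nat.card {a : α // p a = b} = c) : Nat.card α = Nat.card β * c := by
  classical
  cases nonempty_fintype α
  cases nonempty_fintype β
  rw [Nat.card_congr (Equiv.sigmaFiberEquiv p).symm, Nat.card_eq_fintype_card,
    Fintype.card_sigma]
  rw [Nat.card_eq_fintype_card]
  calc (∑ b : β, Fintype.card {a : α // p a = b})
      = ∑ _b : β, c := by
        apply Finset.sum_congr rfl
        intro b _
        rw [← Nat.card_eq_fintype_card, h b]
    _ = Fintype.card β * c := by rw [Finset.sum_const, smul_eq_mul, Finset.card_univ]

instance finiteSubmodule : Finite (Submodule F V) :=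
  Finite.of_injective (fun W => (W : Set V)) SetLike.coe_injective

lemma card_grass [FiniteDimensional F V] (k : ℕ) (hk : k ≤ finrank F V) :
    Nat.card {Wm : Submodule F V // finrank F ↥Wm = k} * ∏ t ∈ range k, (q^k - q^t)
      = ∏ t ∈ range k, (q ^ finrank F V - q ^ t) := by
  classical
  have hspan : ∀ s : {s : Fin k → V // LinearIndependent F s},
      finrank F ↥(Submodule.span F (Set.range s.1)) = k := fun s => by
    rw [finrank_span_eq_card s.2, Fintype.card_fin]
  let p : {s : Fin k → V // LinearIndependent F s} → {Wm : Submodule F V // finrank F ↥Wm = k} :=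
    fun s => ⟨Submodule.span F (Set.range s.1), hspan s⟩
  have hfib : ∀ Wm : {Wm : Submodule F V // finrank F ↥Wm = k},
      Nat.card {s // p s = Wm} = ∏ t ∈ range k, (q^k - q^t) := by
    intro Wm
    have e : {s // p s = Wm} ≃ {s' : Fin k → ↥Wm.1 // LinearIndependent F s'} :=
      { toFun := fun s => ⟨fun t => ⟨s.1.1 t, by
          have h1 : s.1.1 t ∈ Submodule.span F (Set.range s.1.1) :=
            Submodule.subset_span (Set.mem_range_self t)
          have h2 : Submodule.span F (Set.range s.1.1) = Wm.1 := congrArg Subtype.val s.2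
          rwa [h2] at h1⟩, by
          apply LinearIndependent.of_comp Wm.1.subtype
          convert s.1.2 using 1
          funext t; rfl⟩
        invFun := fun s' => ⟨⟨fun t => (s'.1 t).1,
            s'.2.map' Wm.1.subtype (Submodule.ker_subtype _)⟩, by
          apply Subtype.ext
          show Submodule.span F (Set.range fun t => ((s'.1 t : V))) = Wm.1
          have hr : (Set.range fun t => ((s'.1 t : V))) = Wm.1.subtype '' Set.range s'.1 := by
            rw [← Set.range_comp]; rfl
          rw [hr, Submodule.span_image,
            s'.2.span_eq_top_of_card_eq_finrank' (by rw [Fintype.card_fin, Wm.2]),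
            Submodule.map_top, Submodule.range_subtype]⟩
        left_inv := fun s => by apply Subtype.ext; apply Subtype.ext; rfl
        right_inv := fun s' => by apply Subtype.ext; funext t; apply Subtype.ext; rfl }
    rw [Nat.card_congr e]
    have hle : k ≤ finrank F ↥Wm.1 := le_of_eq (by rw [Wm.2])
    have := card_indep (V := ↥Wm.1) k hle
    rw [Wm.2] at this
    exact this
  have htot := card_indep (V := V) k hk
  have hmain := nat_card_eq_card_mul p _ hfib
  rw [← htot, hmain]

end P4


open Finset Module LinearMap

section
variable {F : Type} [Field F] [Fintype F]
variable {V : Type} [AddCommGroup V] [Module F V] [Finite V] [FiniteDimensional F V]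

local notation "q" => Fintype.card F

variable (X : Submodule F V) (k i : ℕ)

/-- Total space for the double count. -/
def TT : Type :=
  {u : Fin (k-i) → ↥X // LinearIndependent F u} ×
    {w : Fin i → V // LinearIndependent F (⇑X.mkQ ∘ w)}

instance : Finite (TT X k i) := by unfold TT; infer_instance

variable {X k i}

/-- The combined family of vectors. -/
def fam (s : TT X k i) : Fin (k-i) ⊕ Fin i → V := Sum.elim (fun a => ((s.1.1 a : V))) s.2.1

lemma fam_indep (s : TT X k i) : LinearIndependent F (fam s) :=
  LinearIndependent.sumElim_of_quotient s.1.2 s.2.1 s.2.2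

/-- The span of the combined family. -/
def spn (s : TT X k i) : Submodule F V := Submodule.span F (Set.range (fam s))

lemma mem_spn_inl (s : TT X k i) (a : Fin (k-i)) : ((s.1.1 a : V)) ∈ spn s :=
  Submodule.subset_span ⟨Sum.inl a, rfl⟩

lemma mem_spn_inr (s : TT X k i) (t : Fin i) : s.2.1 t ∈ spn s :=
  Submodule.subset_span ⟨Sum.inr t, rfl⟩

lemma spn_finrank (hi : i ≤ k) (s : TT X k i) : finrank F ↥(spn s) = k := by
  rw [spn, finrank_span_eq_card (fam_indep s)]
  simp only [Fintype.card_sum, Fintype.card_fin]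
  omega

lemma spn_le {Y : Submodule F V} (s : TT X k i) (h1 : ∀ a, ((s.1.1 a : V)) ∈ Y)
    (h2 : ∀ t, s.2.1 t ∈ Y) : spn s ≤ Y := by
  rw [spn, Submodule.span_le]
  rintro x ⟨a, rfl⟩
  cases a with
  | inl a => exact h1 a
  | inr t => exact h2 t

lemma spn_inter_finrank (hX : finrank F ↥X = k) (hi : i ≤ k) (s : TT X k i) :
    finrank F ↥(X ⊓ spn s) = k - i := by
  classical
  have hwind : LinearIndependent F s.2.1 := LinearIndependent.of_comp X.mkQ s.2.2
  set W' := Submodule.span F (Set.range s.2.1) with hW'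
  have hdisj : Disjoint X W' := by
    rw [Submodule.disjoint_def]
    intro x hxX hxW
    rw [hW', Submodule.mem_span_range_iff_exists_fun] at hxW
    obtain ⟨c, hc⟩ := hxW
    have h0 : ∑ t, c t • (X.mkQ (s.2.1 t)) = 0 := by
      have hx0 : X.mkQ x = 0 := by
        rw [Submodule.mkQ_apply, Submodule.Quotient.mk_eq_zero]
        exact hxX
      rw [← hx0, ← hc, map_sum]
      simp
    have hall := Fintype.linearIndependent_iff.1 s.2.2 c h0
    rw [← hc]
    simp [hall]
  have hWi : finrank F ↥W' = i := by
    rw [hW', finrank_span_eq_card hwind, Fintype.card_fin]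
  have hsupXW : finrank F ↥(X ⊔ W') = k + i := by
    have h1 := Submodule.finrank_sup_add_finrank_inf_eq X W'
    rw [disjoint_iff.1 hdisj, hX, hWi, finrank_bot] at h1
    omega
  have hUleX : Submodule.span F (Set.range (fun a => ((s.1.1 a : V)))) ≤ X := by
    rw [Submodule.span_le]
    rintro x ⟨a, rfl⟩
    exact (s.1.1 a).2
  have hsplit : spn s = Submodule.span F (Set.range (fun a => ((s.1.1 a : V)))) ⊔ W' := by
    rw [spn, fam, Set.Sum.elim_range, Submodule.span_union]
  have hXY : X ⊔ spn s = X ⊔ W' := by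
    rw [hsplit, ← sup_assoc, sup_eq_left.2 hUleX]
  have h1 := Submodule.finrank_sup_add_finrank_inf_eq X (spn s)
  rw [hXY, hsupXW, hX, spn_finrank hi s] at h1
  omega

section fiber
variable (X k i)
variable (Y : Submodule F V)

/-- Fiber data: tuples inside `X ⊓ Y` and in `Y` with independent image mod `X`. -/
def FibT : Type :=
  {u' : Fin (k-i) → ↥(X ⊓ Y) // LinearIndependent F u'} ×
    {w' : Fin i → ↥Y // LinearIndependent F (⇑(X.mkQ ∘ₗ Y.subtype) ∘ w')}

instance : Finite (FibT X k i Y) := by unfold FibT; infer_instance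

variable {X k i Y}

noncomputable def fibTo (s : {s : TT X k i // spn s = Y}) : FibT X k i Y :=
  (⟨fun a => ⟨(s.1.1.1 a : V),
      Submodule.mem_inf.2 ⟨(s.1.1.1 a).2, by have h := mem_spn_inl s.1 a; rwa [s.2] at h⟩⟩,
    by
      apply LinearIndependent.of_comp (X ⊓ Y).subtype
      exact s.1.1.2.map' X.subtype (Submodule.ker_subtype _)⟩,
   ⟨fun t => ⟨s.1.2.1 t, by have h := mem_spn_inr s.1 t; rwa [s.2] at h⟩,
    by
      have h := s.1.2.2
      exact h⟩)

noncomputable def fibInv (hX : finrank F ↥X = k) (hi : i ≤ k) (hYk : finrank F ↥Y = k)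
    (pr : FibT X k i Y) : {s : TT X k i // spn s = Y} := by
  refine ⟨(⟨fun a => ⟨(pr.1.1 a : V), (Submodule.mem_inf.1 (pr.1.1 a).2).1⟩,
      by
        apply LinearIndependent.of_comp X.subtype
        exact pr.1.2.map' (X ⊓ Y).subtype (Submodule.ker_subtype _)⟩,
    ⟨fun t => (pr.2.1 t : V),
      by
        have h := pr.2.2
        exact h⟩), ?_⟩
  apply Submodule.eq_of_le_of_finrank_le
  · apply spn_le
    · intro a
      exact (Submodule.mem_inf.1 (pr.1.1 a).2).2
    · intro t
      exact (pr.2.1 t).2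
  · rw [hYk]; exact (spn_finrank hi _).ge

noncomputable def fibEquiv (hX : finrank F ↥X = k) (hi : i ≤ k) (hYk : finrank F ↥Y = k) :
    {s : TT X k i // spn s = Y} ≃ FibT X k i Y where
  toFun := fibTo
  invFun := fibInv hX hi hYk
  left_inv := fun s => by
    apply Subtype.ext
    apply Prod.ext
    · apply Subtype.ext; funext a; apply Subtype.ext; rfl
    · apply Subtype.ext; funext t; rfl
  right_inv := fun pr => by
    apply Prod.ext
    · apply Subtype.ext; funext a; apply Subtype.ext; rfl
    · apply Subtype.ext; funext t; apply Subtype.ext; rfl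

end fiber

lemma card_fibT (hX : finrank F ↥X = k) (hi : i ≤ k) {Y : Submodule F V}
    (hYk : finrank F ↥Y = k) (hYi : finrank F ↥(X ⊓ Y) = k - i) :
    Nat.card (FibT X k i Y)
      = (∏ t ∈ range (k-i), (q^(k-i) - q^t)) * (q^((k-i)*i) * ∏ t ∈ range i, (q^i - q^t)) := by
  rw [FibT, Nat.card_prod]
  set φ : ↥Y →ₗ[F] V ⧸ X := X.mkQ ∘ₗ Y.subtype with hφ
  have hfinq : Finite (V ⧸ X) := Finite.of_surjective _ (Submodule.mkQ_surjective X)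
  have hker : LinearMap.ker φ = Submodule.comap Y.subtype X := by
    rw [hφ, LinearMap.ker_comp, Submodule.ker_mkQ]
  have hkerrank : finrank F ↥(LinearMap.ker φ) = k - i := by
    rw [hker]
    have hc : Submodule.comap Y.subtype X = Submodule.comap Y.subtype (X ⊓ Y) := by
      rw [Submodule.comap_inf, Submodule.comap_subtype_self, inf_top_eq]
    rw [hc, ← hYi]
    exact LinearEquiv.finrank_eq (Submodule.comapSubtypeEquivOfLe inf_le_right)
  have hrangerank : finrank F ↥(LinearMap.range φ) = i := by
    have h1 := LinearMap.finrank_range_add_finrank_ker φ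
    rw [hkerrank, hYk] at h1
    omega
  have hA : Nat.card {u' : Fin (k-i) → ↥(X ⊓ Y) // LinearIndependent F u'}
      = ∏ t ∈ range (k-i), (q^(k-i) - q^t) := by
    have h := card_indep (V := ↥(X ⊓ Y)) (k-i) (le_of_eq hYi.symm)
    rw [hYi] at h
    exact h
  have hB : Nat.card {w' : Fin i → ↥Y // LinearIndependent F (⇑φ ∘ w')}
      = q^((k-i)*i) * ∏ t ∈ range i, (q^i - q^t) := by
    have h := card_indep_comp φ i (le_of_eq hrangerank.symm)
    rw [hkerrank, hrangerank] at h
    exact h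
  rw [hA, hB]

lemma card_inter (hX : finrank F ↥X = k) (hi : i ≤ k) (hki : k ≤ finrank F V - k) :
    Nat.card {Y : Submodule F V // finrank F ↥Y = k ∧ finrank F ↥(X ⊓ Y) = k - i}
        * ((∏ t ∈ range (k-i), (q^(k-i) - q^t)) * (q^((k-i)*i) * ∏ t ∈ range i, (q^i - q^t)))
      = (∏ t ∈ range (k-i), (q^k - q^t)) *
          (q^(k*i) * ∏ t ∈ range i, (q^(finrank F V - k) - q^t)) := by
  classical
  set n := finrank F V with hn
  have hkn : k ≤ n := by rw [← hX]; exact X.finrank_le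
  have hfinq : Finite (V ⧸ X) := Finite.of_surjective _ (Submodule.mkQ_surjective X)
  have hrq : finrank F (V ⧸ X) = n - k := by
    have := Submodule.finrank_quotient_add_finrank X
    omega
  have hfinsub : Finite (Submodule F V) :=
    Finite.of_injective (fun W => (W : Set V)) SetLike.coe_injective
  let p : TT X k i → {Y : Submodule F V // finrank F ↥Y = k ∧ finrank F ↥(X ⊓ Y) = k - i} :=
    fun s => ⟨spn s, spn_finrank hi s, spn_inter_finrank hX hi s⟩
  have hfib : ∀ Ym : {Y : Submodule F V // finrank F ↥Y = k ∧ finrank F ↥(X ⊓ Y) = k - i},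
      Nat.card {s : TT X k i // p s = Ym}
        = (∏ t ∈ range (k-i), (q^(k-i) - q^t)) * (q^((k-i)*i) * ∏ t ∈ range i, (q^i - q^t)) := by
    intro Ym
    have e1 : {s : TT X k i // p s = Ym} ≃ {s : TT X k i // spn s = Ym.1} :=
      Equiv.subtypeEquivRight (fun s => by
        constructor
        · intro h; exact congrArg Subtype.val h
        · intro h; exact Subtype.ext h)
    rw [Nat.card_congr e1, Nat.card_congr (fibEquiv hX hi Ym.2.1)]
    exact card_fibT hX hi Ym.2.1 Ym.2.2
  have hmain := nat_card_eq_card_mul p _ hfib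
  have hcardU : Nat.card {u : Fin (k-i) → ↥X // LinearIndependent F u}
      = ∏ t ∈ range (k-i), (q^k - q^t) := by
    have h := card_indep (V := ↥X) (k-i) (by rw [hX]; omega)
    rw [hX] at h
    exact h
  have hcardW : Nat.card {w : Fin i → V // LinearIndependent F (⇑X.mkQ ∘ w)}
      = q^(k*i) * ∏ t ∈ range i, (q^(n-k) - q^t) := by
    have hrange' : finrank F ↥(LinearMap.range X.mkQ) = n - k := by
      rw [Submodule.range_mkQ, finrank_top, hrq]
    have h := card_indep_comp X.mkQ i (by rw [hrange']; omega)
    rw [hrange', Submodule.ker_mkQ, hX] at h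
    exact h
  have hTcard : Nat.card (TT X k i) = (∏ t ∈ range (k-i), (q^k - q^t)) *
      (q^(k*i) * ∏ t ∈ range i, (q^(n-k) - q^t)) := by
    rw [TT, Nat.card_prod, hcardU, hcardW]
  rw [hTcard] at hmain
  rw [← hmain]

end

section P6



open Finset Module LinearMap


section
variable {F : Type} [Field F] [Fintype F]
variable {V : Type} [AddCommGroup V] [Module F V] [Finite V] [FiniteDimensional F V]

local notation "q" => Fintype.card F

lemma cast_ffN {qq m j : ℕ} (hq : 1 ≤ qq) (h : j ≤ m) :
    ((∏ t ∈ range j, (qq^m - qq^t) : ℕ) : ℤ) = ffZ qq m j := by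
  rw [Nat.cast_prod, ffZ]
  apply Finset.prod_congr rfl
  intro t ht
  have hle : qq^t ≤ qq^m := Nat.pow_le_pow_right hq (le_trans (Finset.mem_range.1 ht).le h)
  rw [Nat.cast_sub hle]
  push_cast
  rfl

lemma cast_ffN' {qq m j : ℕ} (hq : 1 ≤ qq) (h : j ≤ m) :
    (∏ t ∈ range j, (((qq^m - qq^t : ℕ)) : ℤ)) = ffZ qq m j := by
  rw [← Nat.cast_prod]
  exact cast_ffN hq h

lemma card_inter_qbin (hq2 : 2 ≤ q) {X : Submodule F V} {k i : ℕ}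
    (hX : finrank F ↥X = k) (hi : i ≤ k) (hki : k ≤ finrank F V - k) :
    Nat.card {Y : Submodule F V // finrank F ↥Y = k ∧ finrank F ↥(X ⊓ Y) = k - i}
      = q ^ (i^2) * qbin q k i * qbin q (finrank F V - k) i := by
  have hq1 : 1 ≤ q := le_trans (by norm_num) hq2
  set n := finrank F V with hn
  have hin : i ≤ n - k := le_trans hi hki
  have h0 := card_inter (F := F) (V := V) hX hi hki
  have hcast : (Nat.card {Y : Submodule F V // finrank F ↥Y = k ∧ finrank F ↥(X ⊓ Y) = k - i} : ℤ)
      * (ffZ q (k-i) (k-i) * ((q:ℤ)^((k-i)*i) * ffZ q i i))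
      = ffZ q k (k-i) * ((q:ℤ)^(k*i) * ffZ q (n-k) i) := by
    have hthis := congrArg (fun x : ℕ => (x : ℤ)) h0
    push_cast at hthis
    rw [cast_ffN' hq1 (le_refl (k-i)), cast_ffN' hq1 (le_refl i), cast_ffN' hq1 (Nat.sub_le k i),
      cast_ffN' hq1 hin] at hthis
    exact hthis
  have htarget : ((q ^ (i^2) * qbin q k i * qbin q (n - k) i : ℕ) : ℤ)
      * (ffZ q (k-i) (k-i) * ((q:ℤ)^((k-i)*i) * ffZ q i i))
      = ffZ q k (k-i) * ((q:ℤ)^(k*i) * ffZ q (n-k) i) := by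
    push_cast
    rw [← qbin_symm hq2 hi]
    have hpow : (q:ℤ)^(i^2) * (q:ℤ)^((k-i)*i) = (q:ℤ)^(k*i) := by
      rw [← pow_add]
      congr 1
      have h1 : i*i ≤ k*i := Nat.mul_le_mul_right _ hi
      rw [pow_two, Nat.sub_mul]
      omega
    calc (q:ℤ)^(i^2) * (qbin q k (k-i) : ℤ) * (qbin q (n-k) i : ℤ)
          * (ffZ q (k-i) (k-i) * ((q:ℤ)^((k-i)*i) * ffZ q i i))
        = ((q:ℤ)^(i^2) * (q:ℤ)^((k-i)*i)) * (((qbin q k (k-i) : ℤ)) * ffZ q (k-i) (k-i))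
            * (((qbin q (n-k) i : ℤ)) * ffZ q i i) := by ring
      _ = (q:ℤ)^(k*i) * ffZ q k (k-i) * ffZ q (n-k) i := by
          rw [hpow, qbin_mul_ffZ, qbin_mul_ffZ]
      _ = ffZ q k (k-i) * ((q:ℤ)^(k*i) * ffZ q (n-k) i) := by ring
  have hfpos : (0:ℤ) < ffZ q (k-i) (k-i) * ((q:ℤ)^((k-i)*i) * ffZ q i i) := by
    apply mul_pos (ffZ_pos hq2 (le_refl _))
    apply mul_pos _ (ffZ_pos hq2 (le_refl _))
    positivity
  have := mul_right_cancel₀ (ne_of_gt hfpos) (hcast.trans htarget.symm)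
  exact_mod_cast this

lemma card_ball (hq2 : 2 ≤ q) {X : Submodule F V} {k d : ℕ}
    (hX : finrank F ↥X = k) (hdk : d ≤ k) (hki : k ≤ finrank F V - k) :
    Nat.card {Y : Submodule F V // finrank F ↥Y = k ∧ k - finrank F ↥(X ⊓ Y) < d}
      = injBallSize q (finrank F V) k d := by
  classical
  cases nonempty_fintype (Submodule F V)
  set n := finrank F V with hn
  rw [Nat.card_eq_fintype_card, Fintype.card_subtype]
  have hsplit : (univ.filter (fun Y : Submodule F V =>
        finrank F ↥Y = k ∧ k - finrank F ↥(X ⊓ Y) < d))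
      = (range d).biUnion (fun i => univ.filter (fun Y : Submodule F V =>
        finrank F ↥Y = k ∧ finrank F ↥(X ⊓ Y) = k - i)) := by
    ext Y
    simp only [Finset.mem_filter, Finset.mem_biUnion, Finset.mem_range, Finset.mem_univ,
      true_and]
    constructor
    · rintro ⟨hYk, hlt⟩
      have hr : finrank F ↥(X ⊓ Y) ≤ k := by
        rw [← hX]
        exact Submodule.finrank_mono inf_le_left
      exact ⟨k - finrank F ↥(X ⊓ Y), hlt, hYk, by omega⟩
    · rintro ⟨i, hid, hYk, hYi⟩
      refine ⟨hYk, ?_⟩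
      rw [hYi]
      omega
  rw [hsplit, Finset.card_biUnion]
  · apply Finset.sum_congr rfl
    intro i hi
    have hik : i ≤ k := le_trans (Nat.lt_of_lt_of_le (Finset.mem_range.1 hi) hdk).le (le_refl k)
    rw [← Fintype.card_subtype, ← Nat.card_eq_fintype_card]
    exact card_inter_qbin hq2 hX hik hki
  · intro a ha b hb hab
    apply Finset.disjoint_left.2
    intro Y hYa hYb
    simp only [Finset.mem_filter] at hYa hYb
    apply hab
    have ha' : a < d := Finset.mem_range.1 ha
    have hb' : b < d := Finset.mem_range.1 hb
    omega

end

end P6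


open Finset

variable {M : Type*} [DecidableEq M]

lemma choose_id {N S : ℕ} (hS : 2 ≤ S) (hSN : S ≤ N) :
    N * (N-1) * (N-2).choose (S-2) = S * (S-1) * N.choose S := by
  obtain ⟨s, rfl⟩ : ∃ s, S = s + 2 := ⟨S - 2, by omega⟩
  obtain ⟨m, rfl⟩ : ∃ m, N = m + 2 := ⟨N - 2, by omega⟩
  simp only [Nat.add_sub_cancel]
  have e1 : (m+2) * (m+1).choose (s+1) = (m+2).choose (s+2) * (s+2) :=
    Nat.add_one_mul_choose_eq (m+1) (s+1)
  have e2 : (m+1) * (m).choose s = (m+1).choose (s+1) * (s+1) :=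
    Nat.add_one_mul_choose_eq m s
  have h1 : (m+2)-1 = m+1 := rfl
  have h2 : (s+2)-1 = s+1 := rfl
  rw [h1, h2]
  calc (m+2)*(m+1)*Nat.choose m s = (m+2)*((m+1)*Nat.choose m s) := by ring
    _ = (m+2)*(Nat.choose (m+1) (s+1)*(s+1)) := by rw [e2]
    _ = ((m+2)*Nat.choose (m+1) (s+1))*(s+1) := by ring
    _ = (Nat.choose (m+2) (s+2)*(s+2))*(s+1) := by rw [e1]
    _ = (s+2)*(s+1)*Nat.choose (m+2) (s+2) := by ring

section
variable (G : Finset M) (close : M → M → Prop) [DecidableRel close] (S b : ℕ)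

/-- pairs counting set -/
def P2 : Finset (Finset M) :=
  (G.powersetCard 2).filter (fun p => ∃ X ∈ p, ∃ Y ∈ p, X ≠ Y ∧ close X Y)

def badSet : Finset (Finset M) :=
  (G.powersetCard S).filter (fun A => ∃ X ∈ A, ∃ Y ∈ A, X ≠ Y ∧ close X Y)

variable {G close S b}

lemma contain_count {p : Finset M} (hpG : p ⊆ G) (hp2 : p.card = 2) (hS : 2 ≤ S) :
    ((G.powersetCard S).filter (fun A => p ⊆ A)).card = (G.card - 2).choose (S - 2) := by
  have key : ((G.powersetCard S).filter (fun A => p ⊆ A)).card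
      = ((G \ p).powersetCard (S-2)).card := by
    apply Finset.card_bij' (fun A _ => A \ p) (fun B _ => B ∪ p)
    · intro A hA
      simp only [mem_filter, mem_powersetCard] at hA
      obtain ⟨⟨hAG, hAS⟩, hpA⟩ := hA
      rw [mem_powersetCard]
      constructor
      · intro x hx
        rw [Finset.mem_sdiff] at hx ⊢
        exact ⟨hAG hx.1, hx.2⟩
      · rw [Finset.card_sdiff_of_subset hpA, hAS, hp2]
    · intro B hB
      rw [mem_powersetCard] at hB
      obtain ⟨hBG, hBS⟩ := hB
      have hdisj : Disjoint B p := by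
        rw [Finset.disjoint_left]
        intro x hxB hxp
        exact (Finset.mem_sdiff.1 (hBG hxB)).2 hxp
      simp only [mem_filter, mem_powersetCard]
      refine ⟨⟨?_, ?_⟩, ?_⟩
      · intro x hx
        rcases Finset.mem_union.1 hx with h | h
        · exact (Finset.mem_sdiff.1 (hBG h)).1
        · exact hpG h
      · rw [Finset.card_union_of_disjoint hdisj, hBS, hp2]
        omega
      · exact Finset.subset_union_right
    · intro A hA
      simp only [mem_filter] at hA
      exact Finset.sdiff_union_of_subset hA.2
    · intro B hB
      rw [mem_powersetCard] at hB
      apply Finset.union_sdiff_cancel_right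
      rw [Finset.disjoint_left]
      intro x hxB hxp
      exact (Finset.mem_sdiff.1 (hB.1 hxB)).2 hxp
  rw [key, Finset.card_powersetCard, Finset.card_sdiff_of_subset hpG, hp2]


lemma bad_subset :
    badSet G close S ⊆ (P2 G close).biUnion
      (fun p => (G.powersetCard S).filter (fun A => p ⊆ A)) := by
  intro A hA
  simp only [badSet, mem_filter] at hA
  obtain ⟨hAp, X, hXA, Y, hYA, hXY, hcl⟩ := hA
  have hAG := (Finset.mem_powersetCard.1 hAp).1
  apply Finset.mem_biUnion.2
  refine ⟨{X, Y}, ?_, ?_⟩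
  · simp only [P2, mem_filter, mem_powersetCard]
    refine ⟨⟨?_, Finset.card_pair hXY⟩, X, by simp, Y, by simp, hXY, hcl⟩
    rw [Finset.insert_subset_iff, Finset.singleton_subset_iff]
    exact ⟨hAG hXA, hAG hYA⟩
  · simp only [mem_filter]
    refine ⟨hAp, ?_⟩
    rw [Finset.insert_subset_iff, Finset.singleton_subset_iff]
    exact ⟨hXA, hYA⟩

lemma bad_card_le (hS : 2 ≤ S) :
    (badSet G close S).card ≤ (P2 G close).card * (G.card - 2).choose (S - 2) := by
  calc (badSet G close S).card
      ≤ ((P2 G close).biUnion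
          (fun p => (G.powersetCard S).filter (fun A => p ⊆ A))).card :=
        Finset.card_le_card bad_subset
    _ ≤ ∑ p ∈ P2 G close, ((G.powersetCard S).filter (fun A => p ⊆ A)).card :=
        Finset.card_biUnion_le
    _ ≤ ∑ _p ∈ P2 G close, (G.card - 2).choose (S - 2) := by
        apply Finset.sum_le_sum
        intro p hp
        have hp' := Finset.mem_powersetCard.1 (Finset.mem_filter.1 hp).1
        rw [contain_count hp'.1 hp'.2 hS]
    _ = (P2 G close).card * (G.card - 2).choose (S - 2) := by
        rw [Finset.sum_const, smul_eq_mul]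

lemma two_P2 (hsym : ∀ X Y, close X Y → close Y X) (hrefl : ∀ X ∈ G, close X X)
    (hball : ∀ X ∈ G, (G.filter (fun Y => close X Y)).card = b) :
    2 * (P2 G close).card = G.card * (b - 1) := by
  classical
  set OD := (G ×ˢ G).filter (fun z : M × M => z.1 ≠ z.2 ∧ close z.1 z.2) with hOD
  have h2a : OD.card = G.card * (b - 1) := by
    rw [Finset.card_eq_sum_card_fiberwise
      (f := Prod.fst) (t := G) (fun z hz => (Finset.mem_product.1 (Finset.mem_filter.1 hz).1).1)]
    have hfib : ∀ X ∈ G, (OD.filter (fun z => z.1 = X)).card = b - 1 := by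
      intro X hX
      have e1 : (OD.filter (fun z => z.1 = X)).card
          = (G.filter (fun Y => X ≠ Y ∧ close X Y)).card := by
        refine Finset.card_bij' (fun z _ => z.2) (fun Y _ => (X, Y)) ?hi ?hj ?li ?ri
        case hi =>
          intro z hz
          simp only [hOD, mem_filter, Finset.mem_product] at hz
          obtain ⟨⟨⟨h1, h2⟩, h3, h4⟩, h5⟩ := hz
          subst h5
          simp only [mem_filter]
          exact ⟨h2, h3, h4⟩
        case hj =>
          intro Y hY
          have h := Finset.mem_filter.1 hY
          exact Finset.mem_filter.2 ⟨Finset.mem_filter.2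
            ⟨Finset.mem_product.2 ⟨hX, h.1⟩, h.2.1, h.2.2⟩, rfl⟩
        case li =>
          intro z hz
          have h := (Finset.mem_filter.1 hz).2
          exact Prod.ext h.symm rfl
        case ri =>
          intro z hz
          rfl
      rw [e1]
      have e2 : G.filter (fun Y => X ≠ Y ∧ close X Y)
          = (G.filter (fun Y => close X Y)).erase X := by
        ext Y
        simp only [mem_filter, Finset.mem_erase]
        constructor
        · rintro ⟨h1, h2, h3⟩; exact ⟨fun h => h2 h.symm, h1, h3⟩
        · rintro ⟨h1, h2, h3⟩; exact ⟨h2, fun h => h1 h.symm, h3⟩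
      rw [e2, Finset.card_erase_of_mem, hball X hX]
      exact Finset.mem_filter.2 ⟨hX, hrefl X hX⟩
    calc (∑ X ∈ G, (OD.filter (fun z => z.1 = X)).card)
        = ∑ X ∈ G, (b-1) := Finset.sum_congr rfl hfib
      _ = G.card * (b-1) := by rw [Finset.sum_const, smul_eq_mul]
  have h2b : OD.card = 2 * (P2 G close).card := by
    rw [Finset.card_eq_sum_card_fiberwise
      (f := fun z : M × M => ({z.1, z.2} : Finset M)) (t := P2 G close) ?memcond]
    case memcond =>
      intro z hz
      simp only [hOD, Finset.mem_coe, mem_filter, Finset.mem_product] at hz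
      obtain ⟨⟨h1, h2⟩, h3, h4⟩ := hz
      simp only [P2, Finset.mem_coe, mem_filter, mem_powersetCard]
      refine ⟨⟨?_, Finset.card_pair h3⟩, z.1, by simp, z.2, by simp, h3, h4⟩
      rw [Finset.insert_subset_iff, Finset.singleton_subset_iff]
      exact ⟨h1, h2⟩
    have hfib2 : ∀ p ∈ P2 G close,
        (OD.filter (fun z : M × M => ({z.1, z.2} : Finset M) = p)).card = 2 := by
      intro p hp
      simp only [P2, mem_filter, mem_powersetCard] at hp
      obtain ⟨⟨hpG, hp2⟩, X', hX'p, Y', hY'p, hne', hcl'⟩ := hp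
      obtain ⟨x, y, hxy, rfl⟩ := Finset.card_eq_two.1 hp2
      have hxG : x ∈ G := hpG (by simp)
      have hyG : y ∈ G := hpG (by simp)
      have hclxy : close x y := by
        have hx' : X' = x ∨ X' = y := by
          rcases Finset.mem_insert.1 hX'p with h | h
          · exact Or.inl h
          · exact Or.inr (Finset.mem_singleton.1 h)
        have hy' : Y' = x ∨ Y' = y := by
          rcases Finset.mem_insert.1 hY'p with h | h
          · exact Or.inl h
          · exact Or.inr (Finset.mem_singleton.1 h)
        rcases hx' with rfl | rfl <;> rcases hy' with rfl | rfl
        · exact absurd rfl hne'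
        · exact hcl'
        · exact hsym _ _ hcl'
        · exact absurd rfl hne'
      have : OD.filter (fun z : M × M => ({z.1, z.2} : Finset M) = {x, y})
          = {(x, y), (y, x)} := by
        ext z
        simp only [hOD, mem_filter, Finset.mem_product, Finset.mem_insert,
          Finset.mem_singleton]
        constructor
        · rintro ⟨⟨⟨hz1, hz2⟩, hzne, hzcl⟩, hzp⟩
          have hz1m : z.1 = x ∨ z.1 = y := by
            have : z.1 ∈ ({x, y} : Finset M) := by
              rw [← hzp]; simp
            simpa using this
          have hz2m : z.2 = x ∨ z.2 = y := by
            have : z.2 ∈ ({x, y} : Finset M) := by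
              rw [← hzp]; simp
            simpa using this
          rcases hz1m with h1 | h1 <;> rcases hz2m with h2 | h2
          · exact absurd (h1.trans h2.symm) hzne
          · exact Or.inl (Prod.ext h1 h2)
          · exact Or.inr (Prod.ext h1 h2)
          · exact absurd (h1.trans h2.symm) hzne
        · rintro (rfl | rfl)
          · exact ⟨⟨⟨hxG, hyG⟩, hxy, hclxy⟩, rfl⟩
          · exact ⟨⟨⟨hyG, hxG⟩, fun h => hxy h.symm, hsym _ _ hclxy⟩, Finset.pair_comm _ _⟩
      rw [this]
      rw [Finset.card_insert_of_notMem, Finset.card_singleton]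
      simp only [Finset.mem_singleton]
      intro h
      exact hxy (congrArg Prod.fst h)
    calc (∑ p ∈ P2 G close, (OD.filter (fun z : M × M => ({z.1, z.2} : Finset M) = p)).card)
        = ∑ _p ∈ P2 G close, 2 := Finset.sum_congr rfl hfib2
      _ = 2 * (P2 G close).card := by rw [Finset.sum_const, smul_eq_mul, mul_comm]
  omega

/-- The main counting bound. -/
lemma main_count (hsym : ∀ X Y, close X Y → close Y X) (hrefl : ∀ X ∈ G, close X X)
    (hball : ∀ X ∈ G, (G.filter (fun Y => close X Y)).card = b)
    (hS : 2 ≤ S) (hSN : S ≤ G.card) :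
    (badSet G close S).card * (2 * (G.card - 1))
      ≤ (b - 1) * (S * ((S - 1) * (G.card).choose S)) := by
  have h1 := bad_card_le (G := G) (close := close) hS
  have h2 := two_P2 hsym hrefl hball
  have h3 := choose_id hS hSN
  calc (badSet G close S).card * (2 * (G.card - 1))
      ≤ ((P2 G close).card * (G.card - 2).choose (S - 2)) * (2 * (G.card - 1)) :=
        Nat.mul_le_mul_right _ h1
    _ = (2 * (P2 G close).card) * ((G.card - 1) * (G.card - 2).choose (S - 2)) := by ring
    _ = (G.card * (b - 1)) * ((G.card - 1) * (G.card - 2).choose (S - 2)) := by rw [h2]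
    _ = (b - 1) * (G.card * (G.card - 1) * (G.card - 2).choose (S - 2)) := by ring
    _ = (b - 1) * (S * (S - 1) * (G.card).choose S) := by rw [h3]
    _ = (b - 1) * (S * ((S - 1) * (G.card).choose S)) := by ring

end


set_option maxHeartbeats 1000000 in
/-- `δ ≥ 1 - (b-1) S (S-1) / (2 ([n choose k]_q - 1))`. -/
theorem stmt_14 (q n k d S : ℕ) (hq : IsPrimePow q) (hd : 2 ≤ d) (hdk : d ≤ k)
    (hk : k ≤ n - k) (hS : 2 ≤ S) (hSq : S ≤ qbin q n k)
    (F : Type) [Field F] [Fintype F] (hF : Fintype.card F = q) :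
    densityI F n k S d ≥
      1 - ((injBallSize q n k d : ℝ) - 1) * S * (S - 1)
        / (2 * ((qbin q n k : ℝ) - 1)) := by
  classical
  have hq2 : 2 ≤ q := hq.two_le
  subst hF
  have hnV : finrank F (Fin n → F) = n := by
    simp [Module.finrank_pi]
  have hkn : k ≤ n := by omega
  have hk2 : 2 ≤ k := le_trans hd hdk
  cases nonempty_fintype (Submodule F (Fin n → F))
  set G : Finset (Submodule F (Fin n → F)) :=
    Finset.univ.filter (fun Y => finrank F ↥Y = k) with hGdef
  set close : Submodule F (Fin n → F) → Submodule F (Fin n → F) → Prop :=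
    fun X Y => k - finrank F ↥(X ⊓ Y) < d with hclosedef
  have hq1 : 1 ≤ Fintype.card F := by omega
  -- G.card = qbin q n k
  have hG_N : G.card = qbin (Fintype.card F) n k := by
    have h1 := card_grass (F := F) (V := Fin n → F) k (by rw [hnV]; exact hkn)
    rw [hnV] at h1
    have h2 : Nat.card {Wm : Submodule F (Fin n → F) // finrank F ↥Wm = k} = G.card := by
      rw [Nat.card_eq_fintype_card, Fintype.card_subtype, hGdef]
    rw [h2] at h1
    have hcast := congrArg (fun x : ℕ => (x:ℤ)) h1
    push_cast at hcast
    rw [cast_ffN' hq1 (le_refl k), cast_ffN' hq1 hkn] at hcast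
    have hqm := qbin_mul_ffZ (Fintype.card F) n k
    have hpos := ffZ_pos hq2 (le_refl k)
    have := mul_right_cancel₀ (ne_of_gt hpos) (hcast.trans hqm.symm)
    exact_mod_cast this
  have hSN : S ≤ G.card := by rw [hG_N]; exact hSq
  have hN2 : 2 ≤ G.card := le_trans hS hSN
  -- ball count
  have hball : ∀ X ∈ G, (G.filter (fun Y => close X Y)).card
      = injBallSize (Fintype.card F) n k d := by
    intro X hX
    have hXk : finrank F ↥X = k := (Finset.mem_filter.1 hX).2
    have h1 := card_ball (F := F) (V := Fin n → F) hq2 hXk hdk (by rw [hnV]; exact hk)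
    rw [hnV] at h1
    rw [← h1, Nat.card_eq_fintype_card, Fintype.card_subtype]
    congr 1
    rw [hGdef, Finset.filter_filter]
  have hsym : ∀ X Y, close X Y → close Y X := by
    intro X Y h
    have h' : k - finrank F ↥(X ⊓ Y) < d := h
    show k - finrank F ↥(Y ⊓ X) < d
    rwa [inf_comm]
  have hrefl : ∀ X ∈ G, close X X := by
    intro X hX
    have hXk : finrank F ↥X = k := (Finset.mem_filter.1 hX).2
    show k - finrank F ↥(X ⊓ X) < d
    have hXX : X ⊓ X = X := by simp
    rw [hXX, hXk]
    omega
  have hb1 : 1 ≤ injBallSize (Fintype.card F) n k d := by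
    have h0 : (0:ℕ) ∈ Finset.range d := Finset.mem_range.2 (by omega)
    have : (Fintype.card F) ^ (0^2) * qbin (Fintype.card F) k 0
        * qbin (Fintype.card F) (n-k) 0 = 1 := by
      simp [qbin]
    calc (1:ℕ) = (Fintype.card F) ^ (0^2) * qbin (Fintype.card F) k 0
          * qbin (Fintype.card F) (n-k) 0 := this.symm
      _ ≤ injBallSize (Fintype.card F) n k d :=
          Finset.single_le_sum (f := fun i => (Fintype.card F)^(i^2) *
            qbin (Fintype.card F) k i * qbin (Fintype.card F) (n-k) i)
            (fun i _ => Nat.zero_le _) h0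
  have hmain := main_count (G := G) (close := close)
    (b := injBallSize (Fintype.card F) n k d) hsym hrefl hball hS hSN
  -- abbreviations
  set b := injBallSize (Fintype.card F) n k d with hbdef
  set N := G.card with hNdef
  set T := N.choose S with hTdef
  set B := (badSet G close S).card with hBdef
  -- good/bad split
  set good : Finset (Finset (Submodule F (Fin n → F))) :=
    (G.powersetCard S).filter
      (fun A => ∀ X ∈ A, ∀ Y ∈ A, X ≠ Y → d ≤ k - finrank F ↥(X ⊓ Y)) with hgooddef
  have hgoodbad : B + good.card = T := by
    have hsplit := Finset.card_filter_add_card_filter_not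
      (s := G.powersetCard S) (p := fun A => ∃ X ∈ A, ∃ Y ∈ A, X ≠ Y ∧ close X Y)
    have hgeq : (G.powersetCard S).filter
        (fun A => ¬ ∃ X ∈ A, ∃ Y ∈ A, X ≠ Y ∧ close X Y) = good := by
      apply Finset.filter_congr
      intro A _
      rw [hclosedef]
      constructor
      · intro hno X hX Y hY hXY
        rw [← Nat.not_lt]
        intro hlt
        exact hno ⟨X, hX, Y, hY, hXY, hlt⟩
      · rintro hall ⟨X, hX, Y, hY, hXY, hlt⟩
        exact Nat.not_lt.2 (hall X hX Y hY hXY) hlt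
    rw [hgeq] at hsplit
    rw [hBdef, hTdef, hNdef, ← Finset.card_powersetCard]
    exact hsplit
  -- bridge Nat.card of set-subtypes to Finset counts
  have hnum : Nat.card {C : Set (Submodule F (Fin n → F)) //
      (∀ X ∈ C, Module.finrank F X = k) ∧ C.ncard = S ∧
      ∀ X ∈ C, ∀ Y ∈ C, X ≠ Y → d ≤ k - Module.finrank F ↥(X ⊓ Y)} = good.card := by
    have e : {A : Finset (Submodule F (Fin n → F)) //
        (∀ X ∈ A, Module.finrank F X = k) ∧ A.card = S ∧
        ∀ X ∈ A, ∀ Y ∈ A, X ≠ Y → d ≤ k - Module.finrank F ↥(X ⊓ Y)} ≃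
        {C : Set (Submodule F (Fin n → F)) //
        (∀ X ∈ C, Module.finrank F X = k) ∧ C.ncard = S ∧
        ∀ X ∈ C, ∀ Y ∈ C, X ≠ Y → d ≤ k - Module.finrank F ↥(X ⊓ Y)} := by
      apply Equiv.subtypeEquiv (Fintype.finsetEquivSet)
      intro A
      simp only [Fintype.finsetEquivSet_apply, Finset.mem_coe, Set.ncard_coe_finset]
    rw [← Nat.card_congr e, Nat.card_eq_fintype_card, Fintype.card_subtype]
    congr 1
    ext A
    simp only [Finset.mem_filter, Finset.mem_univ, true_and, hgooddef,
      Finset.mem_powersetCard]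
    constructor
    · rintro ⟨h1, h2, h3⟩
      exact ⟨⟨fun X hX => Finset.mem_filter.2 ⟨Finset.mem_univ X, h1 X hX⟩, h2⟩, h3⟩
    · rintro ⟨⟨h1, h2⟩, h3⟩
      exact ⟨fun X hX => (Finset.mem_filter.1 (h1 hX)).2, h2, h3⟩
  have hden : Nat.card {C : Set (Submodule F (Fin n → F)) //
      (∀ X ∈ C, Module.finrank F X = k) ∧ C.ncard = S} = T := by
    have e : {A : Finset (Submodule F (Fin n → F)) //
        (∀ X ∈ A, Module.finrank F X = k) ∧ A.card = S} ≃
        {C : Set (Submodule F (Fin n → F)) //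
        (∀ X ∈ C, Module.finrank F X = k) ∧ C.ncard = S} := by
      apply Equiv.subtypeEquiv (Fintype.finsetEquivSet)
      intro A
      simp only [Fintype.finsetEquivSet_apply, Finset.mem_coe, Set.ncard_coe_finset]
    rw [← Nat.card_congr e, Nat.card_eq_fintype_card, Fintype.card_subtype]
    rw [hTdef, hNdef, ← Finset.card_powersetCard]
    congr 1
    ext A
    simp only [Finset.mem_filter, Finset.mem_univ, true_and, Finset.mem_powersetCard]
    constructor
    · rintro ⟨h1, h2⟩
      exact ⟨fun X hX => Finset.mem_filter.2 ⟨Finset.mem_univ X, h1 X hX⟩, h2⟩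
    · rintro ⟨h1, h2⟩
      exact ⟨fun X hX => (Finset.mem_filter.1 (h1 hX)).2, h2⟩
  -- rewrite the goal
  rw [densityI, hnum, hden, ← hG_N]
  -- real arithmetic
  have hTpos : 0 < T := Nat.choose_pos hSN
  have hTposR : (0:ℝ) < T := by exact_mod_cast hTpos
  have hN2R : (2:ℝ) ≤ (N:ℝ) := by exact_mod_cast hN2
  have h2N : (0:ℝ) < 2*((N:ℝ)-1) := by linarith
  have hBT : B ≤ T := by omega
  have key : (B:ℝ) * (2*((N:ℝ)-1)) ≤ ((b:ℝ)-1) * S * ((S:ℝ)-1) * T := by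
    have hc1 : ((N - 1 : ℕ) : ℝ) = (N:ℝ) - 1 := by
      rw [Nat.cast_sub (by omega)]; norm_num
    have hc2 : ((b - 1 : ℕ) : ℝ) = (b:ℝ) - 1 := by
      rw [Nat.cast_sub hb1]; norm_num
    have hc3 : ((S - 1 : ℕ) : ℝ) = (S:ℝ) - 1 := by
      rw [Nat.cast_sub (by omega)]; norm_num
    calc (B:ℝ) * (2*((N:ℝ)-1)) = ((B * (2*(N-1)) : ℕ) : ℝ) := by
          push_cast [hc1]; ring
      _ ≤ (((b-1) * (S * ((S-1) * T)) : ℕ) : ℝ) := by exact_mod_cast hmain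
      _ = ((b:ℝ)-1) * S * ((S:ℝ)-1) * T := by
          push_cast [hc2, hc3]; ring
  have hfrac : (B:ℝ)/T ≤ ((b:ℝ)-1)*S*((S:ℝ)-1)/(2*((N:ℝ)-1)) := by
    rw [div_le_div_iff₀ hTposR h2N]
    linarith [key]
  have hgoodR : (good.card : ℝ) = (T:ℝ) - B := by
    have : good.card = T - B := by omega
    rw [this, Nat.cast_sub hBT]
  rw [hgoodR]
  have hexp : ((T:ℝ) - B)/T = 1 - (B:ℝ)/T := by
    field_simp
  rw [ge_iff_le, hexp]
  linarith [hfrac]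
end
end

section
/- Fix 2 ≤ d ≤ k ≤ n − k and for each prime power q let S_q ≥ 2 be an integer. If S_q ∈ o(q^{(k(n−k)−(d−1)(n−d+1))/2}) as q → ∞, then the proportion of subsets of G_q(k,n) of cardinality S_q with minimum injection distance at least d tends to 1 as q → ∞. -/
set_option linter.unusedSectionVars false
set_option maxHeartbeats 1000000

open Filter Asymptotics

/-- The filter of prime powers tending to infinity. -/
def primePowFilter : Filter ℕ := Filter.atTop ⊓ Filter.principal {q | IsPrimePow q}

section Aux
open Module Submodule Set


variable {F : Type*} [Field F] [Fintype F] {V : Type*} [AddCommGroup V] [Module F V] [Fintype V]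

lemma card_submodule' (p : Submodule F V) : Nat.card ↥p = Fintype.card F ^ finrank F ↥p := by
  have : Fintype ↥p := Fintype.ofFinite _
  rw [Nat.card_eq_fintype_card, card_eq_pow_finrank (K := F)]

lemma card_module' : Nat.card V = Fintype.card F ^ finrank F V := by
  rw [Nat.card_eq_fintype_card, card_eq_pow_finrank (K := F)]

lemma card_li_lower {j : ℕ} (hV : finrank F V = j) :
    ∀ i, i ≤ j → Fintype.card F ^ (i * j) ≤
      2 ^ i * Nat.card {f : Fin i → V // LinearIndependent F f} := by
  have hq : 2 ≤ Fintype.card F := Fintype.one_lt_card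
  intro i
  induction i with
  | zero =>
    intro _
    have hu : Unique {f : Fin 0 → V // LinearIndependent F f} :=
      { default := ⟨Fin.elim0, linearIndependent_empty_type⟩
        uniq := fun f => Subtype.ext (funext fun t => t.elim0) }
    simp [Nat.card_unique]
  | succ i ih =>
    intro hij
    have hi : i ≤ j := Nat.le_of_succ_le hij
    classical
    set q := Fintype.card F with hqdef
    -- the injection from pairs (g, v) to (i+1)-tuples
    have hinj : Function.Injective
        (fun p : Σ g : {g : Fin i → V // LinearIndependent F g},
            {v : V // ¬ v ∈ span F (Set.range g.1)} =>
          (⟨Fin.cons p.2.1 p.1.1, linearIndependent_fin_cons.2 ⟨p.1.2, p.2.2⟩⟩ :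
            {f : Fin (i+1) → V // LinearIndependent F f})) := by
      rintro ⟨⟨g, hg⟩, v, hv⟩ ⟨⟨g', hg'⟩, v', hv'⟩ h
      have h1 : (Fin.cons v g : Fin (i+1) → V) = Fin.cons v' g' := by exact congrArg Subtype.val h
      have hgg : g = g' := funext fun t => by
        have := congrFun h1 t.succ; simpa using this
      have hvv : v = v' := by have := congrFun h1 0; simpa using this
      subst hgg; subst hvv; rfl
    have hle := Nat.card_le_card_of_injective _ hinj
    have hcard : Nat.card (Σ g : {g : Fin i → V // LinearIndependent F g},
        {v : V // ¬ v ∈ span F (Set.range g.1)})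
        = Nat.card {g : Fin i → V // LinearIndependent F g} * (q ^ j - q ^ i) := by
      have : ∀ g : {g : Fin i → V // LinearIndependent F g},
          Nat.card {v : V // ¬ v ∈ span F (Set.range g.1)} = q ^ j - q ^ i := by
        intro g
        have h1 : Nat.card {v : V // v ∈ span F (Set.range g.1)} = q ^ i := by
          have := card_submodule' (F := F) (span F (Set.range g.1))
          rwa [finrank_span_eq_card g.2, Fintype.card_fin] at this
        have hV' : Fintype.card V = q ^ j := by
          rw [← Nat.card_eq_fintype_card, card_module' (F := F), hV]
        have hsp : Fintype.card {v : V // v ∈ span F (Set.range g.1)} = q ^ i := by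
          rw [← Nat.card_eq_fintype_card]; exact h1
        rw [Nat.card_eq_fintype_card, Fintype.card_subtype_compl, hV', hsp]
      rw [Nat.card_eq_fintype_card, Fintype.card_sigma]
      calc (∑ g : {g : Fin i → V // LinearIndependent F g},
            Fintype.card {v : V // ¬ v ∈ span F (Set.range g.1)})
          = ∑ g : {g : Fin i → V // LinearIndependent F g}, (q ^ j - q ^ i) := by
            refine Finset.sum_congr rfl fun g _ => ?_
            rw [← Nat.card_eq_fintype_card, this g]
        _ = _ := by rw [Finset.sum_const, Finset.card_univ, smul_eq_mul,
            ← Nat.card_eq_fintype_card]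
    have hstep : q ^ j ≤ 2 * (q ^ j - q ^ i) := by
      have h2 : 2 * q ^ i ≤ q ^ j := by
        calc 2 * q ^ i ≤ q ^ (j - i) * q ^ i :=
          Nat.mul_le_mul_right _ (le_trans (by simpa using hq : 2 ≤ q ^ 1)
            (Nat.pow_le_pow_right (by omega) (by omega : 1 ≤ j - i)))
        _ = q ^ j := by rw [← pow_add]; congr 1; omega
      omega
    calc q ^ ((i+1) * j) = q ^ (i * j) * q ^ j := by rw [← pow_add]; ring_nf
      _ ≤ (2 ^ i * Nat.card {g : Fin i → V // LinearIndependent F g}) * (2 * (q ^ j - q ^ i)) :=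
          Nat.mul_le_mul (ih hi) hstep
      _ = 2 ^ (i+1) * (Nat.card {g : Fin i → V // LinearIndependent F g} * (q ^ j - q ^ i)) := by
          ring
      _ = 2 ^ (i+1) * Nat.card (Σ g : {g : Fin i → V // LinearIndependent F g},
            {v : V // ¬ v ∈ span F (Set.range g.1)}) := by rw [hcard]
      _ ≤ 2 ^ (i+1) * Nat.card {f : Fin (i+1) → V // LinearIndependent F f} :=
          Nat.mul_le_mul_left _ hle

lemma card_grass_mul_le (j : ℕ) :
    Nat.card {W : Submodule F V // finrank F ↥W = j} * Fintype.card F ^ (j * j) ≤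
      2 ^ j * Fintype.card F ^ (finrank F V * j) := by
  classical
  set q := Fintype.card F with hq
  -- the map sending (W, f) to the tuple of vectors in V
  have hinj : Function.Injective
      (fun p : Σ W : {W : Submodule F V // finrank F ↥W = j},
          {f : Fin j → ↥W.1 // LinearIndependent F f} =>
        (fun t => (p.2.1 t : V) : Fin j → V)) := by
    rintro ⟨⟨W, hW⟩, f, hf⟩ ⟨⟨W', hW'⟩, f', hf'⟩ h
    have hsp : ∀ (W : Submodule F V) (hW : finrank F ↥W = j) (f : Fin j → ↥W)
        (hf : LinearIndependent F f),
        span F (Set.range (fun t => (f t : V))) = W := by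
      intro W hW f hf
      have h1 : span F (Set.range f) = ⊤ :=
        hf.span_eq_top_of_card_eq_finrank' (by rw [Fintype.card_fin, hW])
      have : (Set.range fun t => (f t : V)) = W.subtype '' Set.range f := by
        rw [← Set.range_comp]; rfl
      rw [this, Submodule.span_image, h1, Submodule.map_subtype_top]
    have hWW : W = W' := by
      rw [← hsp W hW f hf, ← hsp W' hW' f' hf']
      simp only at h
      rw [h]
    subst hWW
    have hff : f = f' := funext fun t => Subtype.ext (congrFun h t)
    subst hff
    rfl
  have hle := Nat.card_le_card_of_injective _ hinj
  have hfun : Nat.card (Fin j → V) = q ^ (finrank F V * j) := by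
    rw [Nat.card_eq_fintype_card, Fintype.card_fun, card_eq_pow_finrank (K := F), ← pow_mul,
      Fintype.card_fin]
  have hsig : Nat.card {W : Submodule F V // finrank F ↥W = j} * q ^ (j * j) ≤
      2 ^ j * Nat.card (Σ W : {W : Submodule F V // finrank F ↥W = j},
        {f : Fin j → ↥W.1 // LinearIndependent F f}) := by
    rw [Nat.card_eq_fintype_card (α := Σ _ : _, _), Fintype.card_sigma, Finset.mul_sum]
    calc Nat.card {W : Submodule F V // finrank F ↥W = j} * q ^ (j * j)
        = ∑ _W : {W : Submodule F V // finrank F ↥W = j}, q ^ (j * j) := by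
          rw [Finset.sum_const, Finset.card_univ, smul_eq_mul, Nat.card_eq_fintype_card]
      _ ≤ _ := by
          refine Finset.sum_le_sum fun W _ => ?_
          have := card_li_lower (F := F) (V := ↥W.1) W.2 j le_rfl
          rwa [Nat.card_eq_fintype_card] at this
  calc Nat.card {W : Submodule F V // finrank F ↥W = j} * q ^ (j * j)
      ≤ 2 ^ j * Nat.card (Σ W : {W : Submodule F V // finrank F ↥W = j},
        {f : Fin j → ↥W.1 // LinearIndependent F f}) := hsig
    _ ≤ 2 ^ j * Nat.card (Fin j → V) := Nat.mul_le_mul_left _ hle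
    _ = 2 ^ j * q ^ (finrank F V * j) := by rw [hfun]

lemma card_grass_le {m j : ℕ} (hV : finrank F V = m) (hj : j ≤ m) :
    Nat.card {W : Submodule F V // finrank F ↥W = j} ≤ 2 ^ j * Fintype.card F ^ (j * (m - j)) := by
  have h := card_grass_mul_le (F := F) (V := V) j
  rw [hV] at h
  have hqpos : 0 < Fintype.card F ^ (j * j) := Nat.pow_pos Fintype.card_pos
  have he : j * (m - j) + j * j = m * j := by
    rw [← Nat.mul_add, Nat.sub_add_cancel hj, Nat.mul_comm]
  have : 2 ^ j * Fintype.card F ^ (m * j) =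
      2 ^ j * Fintype.card F ^ (j * (m - j)) * Fintype.card F ^ (j * j) := by
    rw [mul_assoc, ← pow_add, he]
  rw [this] at h
  exact Nat.le_of_mul_le_mul_right h hqpos

lemma exists_le_finrank (W : Submodule F V) (j : ℕ) (hj : j ≤ finrank F ↥W) :
    ∃ Z : Submodule F V, Z ≤ W ∧ finrank F ↥Z = j := by
  induction j with
  | zero => exact ⟨⊥, bot_le, finrank_bot F V⟩
  | succ j ih =>
    obtain ⟨Z, hZW, hZr⟩ := ih (Nat.le_of_succ_le hj)
    have hne : ¬ W ≤ Z := fun hWZ =>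
      absurd (Submodule.finrank_mono hWZ) (by omega)
    obtain ⟨x, hxW, hxZ⟩ := SetLike.not_le_iff_exists.1 hne
    have hx0 : x ≠ 0 := fun h => hxZ (h ▸ Z.zero_mem)
    refine ⟨Z ⊔ span F {x}, sup_le hZW ((span_le).2 (by simpa using hxW)), ?_⟩
    have hlt : Z < Z ⊔ span F {x} := by
      refine lt_of_le_of_ne le_sup_left (fun h => hxZ ?_)
      rw [h]
      exact Submodule.mem_sup_right (Submodule.mem_span_singleton_self x)
    have h1 : finrank F ↥Z < finrank F ↥(Z ⊔ span F {x}) :=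
      Submodule.finrank_lt_finrank_of_lt hlt
    have h2 : finrank F ↥(Z ⊔ span F {x}) ≤ finrank F ↥Z + finrank F ↥(span F {x}) :=
      Submodule.finrank_add_le_finrank_add_finrank _ _
    rw [finrank_span_singleton hx0] at h2
    omega

lemma card_above_le (Z : Submodule F V) (k : ℕ) :
    Nat.card {Y : Submodule F V // finrank F ↥Y = k ∧ Z ≤ Y} ≤
      Nat.card {W : Submodule F (V ⧸ Z) // finrank F ↥W = k - finrank F ↥Z} := by
  refine Nat.card_le_card_of_injective
    (fun Y => ⟨Submodule.map Z.mkQ Y.1, ?_⟩) ?_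
  · obtain ⟨Y, hYk, hZY⟩ := Y
    have hfr : finrank F ↥(Submodule.map Z.mkQ Y) + finrank F ↥Z = k := by
      have hrange : LinearMap.range (Z.mkQ.comp Y.subtype) = Submodule.map Z.mkQ Y := by
        rw [LinearMap.range_comp, Submodule.range_subtype]
      have hker : LinearMap.ker (Z.mkQ.comp Y.subtype) = Submodule.comap Y.subtype Z := by
        rw [LinearMap.ker_comp, Submodule.ker_mkQ]
      have h := LinearMap.finrank_range_add_finrank_ker (Z.mkQ.comp Y.subtype)
      rw [hrange, hker, hYk] at h
      have hc : finrank F ↥(Submodule.comap Y.subtype Z) = finrank F ↥Z :=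
        (Submodule.comapSubtypeEquivOfLe hZY).finrank_eq
      rw [hc] at h
      exact h
    show finrank F ↥(Submodule.map Z.mkQ Y) = k - finrank F ↥Z
    omega
  · rintro ⟨Y, hYk, hZY⟩ ⟨Y', hYk', hZY'⟩ h
    simp only [Subtype.mk.injEq] at h ⊢
    have h2 := congrArg (Submodule.comap Z.mkQ) h
    rwa [Submodule.comap_map_eq, Submodule.comap_map_eq, Submodule.ker_mkQ,
      sup_eq_left.2 hZY, sup_eq_left.2 hZY'] at h2

lemma card_le_finrank_eq (X : Submodule F V) (j : ℕ) :
    Nat.card {Z : Submodule F V // Z ≤ X ∧ finrank F ↥Z = j} =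
      Nat.card {p : Submodule F ↥X // finrank F ↥p = j} := by
  have hfr : ∀ p : Submodule F ↥X, finrank F ↥(Submodule.map X.subtype p) = finrank F ↥p :=
    fun p => ((Submodule.equivMapOfInjective X.subtype X.injective_subtype p).finrank_eq).symm
  refine (Nat.card_eq_of_bijective
    (fun p => ⟨Submodule.map X.subtype p.1, Submodule.map_subtype_le X p.1,
      by rw [hfr]; exact p.2⟩) ⟨?_, ?_⟩).symm
  · intro p p' h
    have h1 : Submodule.map X.subtype p.1 = Submodule.map X.subtype p'.1 :=
      congrArg Subtype.val h
    exact Subtype.ext (Submodule.map_injective_of_injective X.injective_subtype h1)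
  · rintro ⟨Z, hZX, hZj⟩
    have hmc : Submodule.map X.subtype (Submodule.comap X.subtype Z) = Z := by
      rw [Submodule.map_comap_eq, Submodule.range_subtype]
      exact inf_eq_right.2 hZX
    refine ⟨⟨Submodule.comap X.subtype Z, ?_⟩, ?_⟩
    · rw [← hfr, hmc, hZj]
    · exact Subtype.ext hmc

lemma card_ball_le {m k j : ℕ} (hV : finrank F V = m) (X : Submodule F V)
    (hX : finrank F ↥X = k) (hj : j ≤ k) (hkm : k ≤ m) :
    Nat.card {Y : Submodule F V // finrank F ↥Y = k ∧ j ≤ finrank F ↥(X ⊓ Y)} ≤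
      2 ^ k * Fintype.card F ^ (j * (k - j) + (k - j) * ((m - j) - (k - j))) := by
  classical
  set q := Fintype.card F with hq
  set ZT := {Z : Submodule F V // Z ≤ X ∧ finrank F ↥Z = j} with hZT
  have hf : ∀ Y : {Y : Submodule F V // finrank F ↥Y = k ∧ j ≤ finrank F ↥(X ⊓ Y)},
      ∃ Z : Submodule F V, Z ≤ X ⊓ Y.1 ∧ finrank F ↥Z = j :=
    fun Y => exists_le_finrank (X ⊓ Y.1) j Y.2.2
  have hinj : Function.Injective
      (fun Y : {Y : Submodule F V // finrank F ↥Y = k ∧ j ≤ finrank F ↥(X ⊓ Y)} =>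
        (⟨⟨Classical.choose (hf Y), le_trans (Classical.choose_spec (hf Y)).1 inf_le_left,
            (Classical.choose_spec (hf Y)).2⟩,
          ⟨Y.1, Y.2.1, le_trans (Classical.choose_spec (hf Y)).1 inf_le_right⟩⟩ :
          Σ Z : ZT, {Y' : Submodule F V // finrank F ↥Y' = k ∧ Z.1 ≤ Y'})) := by
    intro Y Y' h
    have h2 := congrArg
      (fun p : (Σ Z : ZT, {Y' : Submodule F V // finrank F ↥Y' = k ∧ Z.1 ≤ Y'}) =>
        (p.2.1 : Submodule F V)) h
    exact Subtype.ext h2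
  have hle := Nat.card_le_card_of_injective _ hinj
  -- bound the cardinality of the sigma type
  have hZcard : Nat.card ZT ≤ 2 ^ j * q ^ (j * (k - j)) := by
    rw [hZT, card_le_finrank_eq]
    letI : Fintype ↥X := Fintype.ofFinite _
    exact card_grass_le (F := F) (V := ↥X) hX hj
  have hYcard : ∀ Z : ZT, Nat.card {Y' : Submodule F V // finrank F ↥Y' = k ∧ Z.1 ≤ Y'} ≤
      2 ^ (k - j) * q ^ ((k - j) * ((m - j) - (k - j))) := by
    intro Z
    refine le_trans (card_above_le Z.1 k) ?_
    letI : Fintype (V ⧸ Z.1) := Fintype.ofFinite _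
    have hfrq : finrank F (V ⧸ Z.1) = m - j := by
      have := Submodule.finrank_quotient_add_finrank Z.1
      rw [Z.2.2, hV] at this
      omega
    have hkj : k - j ≤ m - j := by omega
    have := card_grass_le (F := F) (V := V ⧸ Z.1) hfrq hkj
    simp only [Z.2.2]
    exact this
  have hsig : Nat.card (Σ Z : ZT, {Y' : Submodule F V // finrank F ↥Y' = k ∧ Z.1 ≤ Y'}) ≤
      (2 ^ j * q ^ (j * (k - j))) * (2 ^ (k - j) * q ^ ((k - j) * ((m - j) - (k - j)))) := by
    rw [Nat.card_eq_fintype_card, Fintype.card_sigma]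
    calc (∑ Z : ZT, Fintype.card {Y' : Submodule F V // finrank F ↥Y' = k ∧ Z.1 ≤ Y'})
        ≤ ∑ _Z : ZT, 2 ^ (k - j) * q ^ ((k - j) * ((m - j) - (k - j))) := by
          refine Finset.sum_le_sum fun Z _ => ?_
          rw [← Nat.card_eq_fintype_card]
          exact hYcard Z
      _ = Nat.card ZT * (2 ^ (k - j) * q ^ ((k - j) * ((m - j) - (k - j)))) := by
          rw [Finset.sum_const, Finset.card_univ, smul_eq_mul, Nat.card_eq_fintype_card]
      _ ≤ _ := Nat.mul_le_mul_right _ hZcard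
  refine le_trans hle (le_trans hsig (le_of_eq ?_))
  rw [pow_add]
  have h2 : 2 ^ j * 2 ^ (k - j) = 2 ^ k := by
    rw [← pow_add]
    congr 1
    omega
  ring_nf
  rw [← h2]
  ring

lemma card_grass_lower (n k : ℕ) (hkn : k ≤ n) :
    Fintype.card F ^ (k * (n - k)) ≤
      Nat.card {W : Submodule F (Fin n → F) // finrank F ↥W = k} := by
  classical
  have hnk : k + (n - k) = n := by omega
  set M₁ := (Fin k → F)
  set M₂ := (Fin (n - k) → F)
  let e : (M₁ × M₂) ≃ₗ[F] (Fin n → F) :=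
    (LinearEquiv.sumArrowLequivProdArrow (Fin k) (Fin (n - k)) F F).symm.trans
      (LinearEquiv.funCongrLeft F F ((finCongr hnk.symm).trans finSumFinEquiv.symm))
  have hprodinj : ∀ A : M₁ →ₗ[F] M₂, Function.Injective (LinearMap.prod LinearMap.id A) := by
    intro A x y h
    exact congrArg Prod.fst h
  have hrank : ∀ A : M₁ →ₗ[F] M₂,
      finrank F ↥(Submodule.map e.toLinearMap (LinearMap.range (LinearMap.prod LinearMap.id A)))
        = k := by
    intro A
    rw [← (Submodule.equivMapOfInjective e.toLinearMap e.injective _).finrank_eq,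
      LinearMap.finrank_range_of_inj (hprodinj A), finrank_fin_fun]
  have hinj : Function.Injective (fun A : M₁ →ₗ[F] M₂ =>
      (⟨Submodule.map e.toLinearMap (LinearMap.range (LinearMap.prod LinearMap.id A)), hrank A⟩ :
        {W : Submodule F (Fin n → F) // finrank F ↥W = k})) := by
    intro A A' h
    have h1 : Submodule.map e.toLinearMap (LinearMap.range (LinearMap.prod LinearMap.id A)) =
        Submodule.map e.toLinearMap (LinearMap.range (LinearMap.prod LinearMap.id A')) :=
      congrArg Subtype.val h
    have h2 : LinearMap.range (LinearMap.prod LinearMap.id A) =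
        LinearMap.range (LinearMap.prod (R := F) LinearMap.id A') :=
      Submodule.map_injective_of_injective e.injective h1
    refine LinearMap.ext fun x => ?_
    have hx : (x, A x) ∈ LinearMap.range (LinearMap.prod (R := F) LinearMap.id A') := by
      rw [← h2]
      exact ⟨x, rfl⟩
    obtain ⟨y, hy⟩ := hx
    simp only [LinearMap.prod_apply, LinearMap.id_coe, id_eq, Function.prod, Prod.mk.injEq] at hy
    have hA := hy.2
    rw [hy.1] at hA
    exact hA.symm
  have hle := Nat.card_le_card_of_injective _ hinj
  have hcard : Nat.card (M₁ →ₗ[F] M₂) = Fintype.card F ^ (k * (n - k)) := by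
    letI : Finite (M₁ →ₗ[F] M₂) :=
      Finite.of_injective (fun f => (f : M₁ → M₂)) DFunLike.coe_injective
    letI : Fintype (M₁ →ₗ[F] M₂) := Fintype.ofFinite _
    rw [Nat.card_eq_fintype_card, card_eq_pow_finrank (K := F), finrank_linearMap,
      finrank_fin_fun, finrank_fin_fun]
  rwa [hcard] at hle


section Codes
variable {T : Type*} [Fintype T]

/-- Subsets of `G` of size `S`, as sets, are counted by the binomial coefficient. -/
lemma card_codes (G : Set T) (S : ℕ) :
    Nat.card {C : Set T // (∀ X ∈ C, X ∈ G) ∧ C.ncard = S} = (G.ncard).choose S := by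
  classical
  have e1 : {s : Finset T // (∀ X ∈ (↑s : Set T), X ∈ G) ∧ (↑s : Set T).ncard = S} ≃
      {C : Set T // (∀ X ∈ C, X ∈ G) ∧ C.ncard = S} :=
    Equiv.subtypeEquiv Fintype.finsetEquivSet (fun s => Iff.rfl)
  have e2 : {s : Finset T // s ∈ G.toFinset.powersetCard S} ≃
      {s : Finset T // (∀ X ∈ (↑s : Set T), X ∈ G) ∧ (↑s : Set T).ncard = S} := by
    refine Equiv.subtypeEquivRight fun s => ?_
    rw [Finset.mem_powersetCard, Set.ncard_coe_finset]
    simp only [Finset.subset_iff, Set.mem_toFinset, Finset.mem_coe]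
  rw [← Nat.card_congr (e2.trans e1), Nat.card_eq_fintype_card, Fintype.card_coe,
    Finset.card_powersetCard, ← Set.ncard_eq_toFinset_card']

/-- Codes containing a "bad" pair are few: bounded by (number of bad pairs) times
the number of subsets of size `S - 2`. -/
lemma card_bad_codes (G : Set T) (R : T → T → Prop) (S : ℕ) (hS : 2 ≤ S) :
    Nat.card {C : Set T // (∀ X ∈ C, X ∈ G) ∧ C.ncard = S ∧
        ¬ (∀ X ∈ C, ∀ Y ∈ C, X ≠ Y → R X Y)} ≤
      Nat.card {p : T × T // p.1 ∈ G ∧ p.2 ∈ G ∧ p.1 ≠ p.2 ∧ ¬ R p.1 p.2} *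
        (G.ncard).choose (S - 2) := by
  classical
  -- move to finsets
  have e1 : {s : Finset T // (∀ X ∈ (↑s : Set T), X ∈ G) ∧ (↑s : Set T).ncard = S ∧
        ¬ (∀ X ∈ (↑s : Set T), ∀ Y ∈ (↑s : Set T), X ≠ Y → R X Y)} ≃
      {C : Set T // (∀ X ∈ C, X ∈ G) ∧ C.ncard = S ∧ ¬ (∀ X ∈ C, ∀ Y ∈ C, X ≠ Y → R X Y)} :=
    Equiv.subtypeEquiv Fintype.finsetEquivSet (fun s => Iff.rfl)
  rw [← Nat.card_congr e1]
  -- the witness function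
  have hwit : ∀ s : {s : Finset T // (∀ X ∈ (↑s : Set T), X ∈ G) ∧ (↑s : Set T).ncard = S ∧
      ¬ (∀ X ∈ (↑s : Set T), ∀ Y ∈ (↑s : Set T), X ≠ Y → R X Y)},
      ∃ p : T × T, p.1 ∈ s.1 ∧ p.2 ∈ s.1 ∧ p.1 ≠ p.2 ∧ ¬ R p.1 p.2 := by
    rintro ⟨s, h1, h2, h3⟩
    push_neg at h3
    obtain ⟨X, hX, Y, hY, hXY, hR⟩ := h3
    exact ⟨(X, Y), hX, hY, hXY, hR⟩
  set W := fun s : {s : Finset T // (∀ X ∈ (↑s : Set T), X ∈ G) ∧ (↑s : Set T).ncard = S ∧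
      ¬ (∀ X ∈ (↑s : Set T), ∀ Y ∈ (↑s : Set T), X ≠ Y → R X Y)} =>
    Classical.choose (hwit s) with hW
  have hWs : ∀ s, (W s).1 ∈ s.1 ∧ (W s).2 ∈ s.1 ∧ (W s).1 ≠ (W s).2 ∧ ¬ R (W s).1 (W s).2 :=
    fun s => Classical.choose_spec (hwit s)
  -- the injection
  have hinj : Function.Injective (fun s : {s : Finset T //
      (∀ X ∈ (↑s : Set T), X ∈ G) ∧ (↑s : Set T).ncard = S ∧
        ¬ (∀ X ∈ (↑s : Set T), ∀ Y ∈ (↑s : Set T), X ≠ Y → R X Y)} =>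
      ((⟨W s, s.2.1 _ (hWs s).1, s.2.1 _ (hWs s).2.1, (hWs s).2.2.1, (hWs s).2.2.2⟩ :
          {p : T × T // p.1 ∈ G ∧ p.2 ∈ G ∧ p.1 ≠ p.2 ∧ ¬ R p.1 p.2}),
        (⟨(s.1.erase (W s).1).erase (W s).2, by
          constructor
          · intro X hX
            exact s.2.1 X (Finset.mem_of_mem_erase (Finset.mem_of_mem_erase hX))
          · rw [Set.ncard_coe_finset, Finset.card_erase_of_mem
              (Finset.mem_erase_of_ne_of_mem (Ne.symm (hWs s).2.2.1) (hWs s).2.1),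
              Finset.card_erase_of_mem (hWs s).1, ← Set.ncard_coe_finset, s.2.2.1]
            omega⟩ :
          {t : Finset T // (∀ X ∈ (↑t : Set T), X ∈ G) ∧ (↑t : Set T).ncard = S - 2}))) := by
    intro s s' h
    have hpv : W s = W s' := by exact congrArg (fun x => (Prod.fst x).1) h
    have htv : (s.1.erase (W s).1).erase (W s).2 = (s'.1.erase (W s').1).erase (W s').2 := by
      exact congrArg (fun x => (Prod.snd x).1) h
    -- reconstruct s from the data
    have hrec : ∀ u : {s : Finset T // (∀ X ∈ (↑s : Set T), X ∈ G) ∧ (↑s : Set T).ncard = S ∧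
        ¬ (∀ X ∈ (↑s : Set T), ∀ Y ∈ (↑s : Set T), X ≠ Y → R X Y)},
        u.1 = insert (W u).1 (insert (W u).2 ((u.1.erase (W u).1).erase (W u).2)) := by
      intro u
      rw [Finset.insert_erase (Finset.mem_erase_of_ne_of_mem (Ne.symm (hWs u).2.2.1)
        (hWs u).2.1), Finset.insert_erase (hWs u).1]
    refine Subtype.ext ?_
    rw [hrec s, hrec s', htv, hpv]
  have hle := Nat.card_le_card_of_injective _ hinj
  refine le_trans hle (le_of_eq ?_)
  rw [Nat.card_prod]
  congr 1
  have e3 : {t : Finset T // (∀ X ∈ (↑t : Set T), X ∈ G) ∧ (↑t : Set T).ncard = S - 2} ≃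
      {C : Set T // (∀ X ∈ C, X ∈ G) ∧ C.ncard = S - 2} :=
    Equiv.subtypeEquiv Fintype.finsetEquivSet (fun s => Iff.rfl)
  rw [Nat.card_congr e3, card_codes]

/-- Partition of codes into good and bad ones. -/
lemma card_codes_split (G : Set T) (R : T → T → Prop) (S : ℕ) :
    Nat.card {C : Set T // (∀ X ∈ C, X ∈ G) ∧ C.ncard = S ∧
        (∀ X ∈ C, ∀ Y ∈ C, X ≠ Y → R X Y)} +
      Nat.card {C : Set T // (∀ X ∈ C, X ∈ G) ∧ C.ncard = S ∧
        ¬ (∀ X ∈ C, ∀ Y ∈ C, X ≠ Y → R X Y)} =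
      (G.ncard).choose S := by
  classical
  rw [← card_codes G S]
  rw [Nat.card_eq_fintype_card, Nat.card_eq_fintype_card, Nat.card_eq_fintype_card,
    Fintype.card_subtype, Fintype.card_subtype, Fintype.card_subtype]
  have h1 : ∀ (Q : Set T → Prop) [DecidablePred Q],
      Finset.univ.filter (fun C : Set T => (∀ X ∈ C, X ∈ G) ∧ C.ncard = S ∧ Q C) =
        (Finset.univ.filter (fun C : Set T => (∀ X ∈ C, X ∈ G) ∧ C.ncard = S)).filter Q := by
    intro Q _
    ext C
    simp only [Finset.mem_filter, Finset.mem_univ, true_and]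
    tauto
  rw [h1, h1]
  exact Finset.card_filter_add_card_filter_not _

end Codes
section PerField
variable (F : Type) [Field F] [Fintype F]

lemma ncard_G_lower (n k : ℕ) (hkn : k ≤ n) :
    Fintype.card F ^ (k * (n - k)) ≤
      ({X : Submodule F (Fin n → F) | Module.finrank F ↥X = k}).ncard := by
  have h1 := card_grass_lower (F := F) n k hkn
  have h2 : Nat.card {W : Submodule F (Fin n → F) // finrank F ↥W = k} =
      ({X : Submodule F (Fin n → F) | Module.finrank F ↥X = k}).ncard := by
    rw [← Nat.card_coe_set_eq]
    exact Nat.card_congr (Equiv.subtypeEquivRight fun X => Iff.rfl)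
  rw [← h2]
  exact h1

lemma main_bound (n k d : ℕ) (hd : 2 ≤ d) (hdk : d ≤ k) (hk : k ≤ n - k) (S : ℕ)
    (hS2 : 2 ≤ S)
    (hSN : 2 * S ≤ ({X : Submodule F (Fin n → F) | Module.finrank F ↥X = k}).ncard) :
    |densityI F n k S d - 1| ≤
      2 ^ (k + 2) * (Fintype.card F : ℝ) ^ ((d - 1) * (n - (d - 1))) * (S : ℝ) ^ 2 /
        (Fintype.card F : ℝ) ^ (k * (n - k)) := by
  classical
  have hn2k : 2 * k ≤ n := by omega
  have hkn : k ≤ n := by omega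
  set T := Submodule F (Fin n → F) with hT
  set G : Set T := {X : T | Module.finrank F ↥X = k} with hG
  set R : T → T → Prop := fun X Y => d ≤ k - Module.finrank F ↥(X ⊓ Y) with hR
  set q := Fintype.card F with hq
  have hq2 : 2 ≤ q := Fintype.one_lt_card
  set N := G.ncard with hN
  set b := d - 1 with hb
  set j := k - d + 1 with hj
  set K := k * (n - k) with hK
  set bb := b * (n - b) with hbb
  set A := Nat.card {C : Set T // (∀ X ∈ C, X ∈ G) ∧ C.ncard = S ∧
      ∀ X ∈ C, ∀ Y ∈ C, X ≠ Y → R X Y} with hA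
  set Bad := Nat.card {C : Set T // (∀ X ∈ C, X ∈ G) ∧ C.ncard = S ∧
      ¬ ∀ X ∈ C, ∀ Y ∈ C, X ≠ Y → R X Y} with hBad
  set B := N.choose S with hB
  set P := Nat.card {p : T × T // p.1 ∈ G ∧ p.2 ∈ G ∧ p.1 ≠ p.2 ∧ ¬ R p.1 p.2} with hP
  -- partition
  have hAB : A + Bad = B := card_codes_split G R S
  -- bad codes bound
  have hBadLe : Bad ≤ P * N.choose (S - 2) := card_bad_codes G R S hS2
  -- N lower bound
  have hNq : q ^ K ≤ N := by
    have h1 := card_grass_lower (F := F) n k hkn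
    have h2 : Nat.card {W : Submodule F (Fin n → F) // finrank F ↥W = k} = N := by
      rw [hN, ← Nat.card_coe_set_eq]
      exact Nat.card_congr (Equiv.subtypeEquivRight fun X => Iff.rfl)
    rw [← h2]
    exact h1
  have hNpos : 0 < N := lt_of_lt_of_le (Nat.pow_pos (by omega)) hNq
  -- bad pairs bound
  have hPle : P ≤ N * (2 ^ k * q ^ bb) := by
    have hjk : j ≤ k := by omega
    have hfin : ∀ p : {p : T × T // p.1 ∈ G ∧ p.2 ∈ G ∧ p.1 ≠ p.2 ∧ ¬ R p.1 p.2},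
        finrank F ↥(p.1.2) = k ∧ j ≤ finrank F ↥(p.1.1 ⊓ p.1.2) := by
      rintro ⟨⟨X, Y⟩, hX, hY, hne, hr⟩
      refine ⟨hY, ?_⟩
      show j ≤ finrank F ↥(X ⊓ Y)
      have hXk : finrank F ↥X = k := hX
      have hmono : finrank F ↥(X ⊓ Y) ≤ finrank F ↥X := Submodule.finrank_mono inf_le_left
      rw [hXk] at hmono
      simp only [hR, not_le] at hr
      omega
    have hinj : Function.Injective
        (fun p : {p : T × T // p.1 ∈ G ∧ p.2 ∈ G ∧ p.1 ≠ p.2 ∧ ¬ R p.1 p.2} =>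
          (⟨⟨p.1.1, p.2.1⟩, ⟨p.1.2, (hfin p).1, (hfin p).2⟩⟩ :
            Σ X : {X : T // X ∈ G},
              {Y : T // finrank F ↥Y = k ∧ j ≤ finrank F ↥(X.1 ⊓ Y)})) := by
      intro p p' h
      have h1 : p.1.1 = p'.1.1 := by exact congrArg (fun x => x.1.1) h
      have h2 : p.1.2 = p'.1.2 := by exact congrArg (fun x => x.2.1) h
      exact Subtype.ext (Prod.ext h1 h2)
    have hle := Nat.card_le_card_of_injective _ hinj
    have hball : ∀ X : {X : T // X ∈ G},
        Nat.card {Y : T // finrank F ↥Y = k ∧ j ≤ finrank F ↥(X.1 ⊓ Y)} ≤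
          2 ^ k * q ^ bb := by
      intro X
      have hXk : finrank F ↥(X.1) = k := X.2
      have := card_ball_le (F := F) (V := (Fin n → F)) (m := n) (k := k) (j := j)
        (finrank_fin_fun F) X.1 hXk hjk hkn
      refine le_trans this (le_of_eq ?_)
      congr 1
      have e1 : k - j = b := by omega
      have e2 : (n - j) - (k - j) = n - k := by omega
      have e3 : j + (n - k) = n - b := by omega
      rw [e2, e1, hbb, ← e3, ← hq]
      ring
    have hsig : Nat.card (Σ X : {X : T // X ∈ G},
        {Y : T // finrank F ↥Y = k ∧ j ≤ finrank F ↥(X.1 ⊓ Y)}) ≤ N * (2 ^ k * q ^ bb) := by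
      rw [Nat.card_eq_fintype_card, Fintype.card_sigma]
      calc (∑ X : {X : T // X ∈ G},
            Fintype.card {Y : T // finrank F ↥Y = k ∧ j ≤ finrank F ↥(X.1 ⊓ Y)})
          ≤ ∑ _X : {X : T // X ∈ G}, 2 ^ k * q ^ bb := by
            refine Finset.sum_le_sum fun X _ => ?_
            rw [← Nat.card_eq_fintype_card]
            exact hball X
        _ = Nat.card {X : T // X ∈ G} * (2 ^ k * q ^ bb) := by
            rw [Finset.sum_const, Finset.card_univ, smul_eq_mul, Nat.card_eq_fintype_card]
        _ = N * (2 ^ k * q ^ bb) := by rw [Nat.card_coe_set_eq]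
    exact le_trans hle hsig
  -- the binomial identity
  set C2 := N.choose (S - 2) with hC2
  set D := (N - (S - 2)) * (N - (S - 1)) with hD
  have hchoose : C2 * D = B * S * (S - 1) := by
    have h1 : N.choose (S - 1) * (S - 1) = C2 * (N - (S - 2)) := by
      have := Nat.choose_succ_right_eq N (S - 2)
      rwa [show S - 2 + 1 = S - 1 by omega] at this
    have h2 : B * S = N.choose (S - 1) * (N - (S - 1)) := by
      have := Nat.choose_succ_right_eq N (S - 1)
      rwa [show S - 1 + 1 = S by omega] at this
    calc C2 * D = (C2 * (N - (S - 2))) * (N - (S - 1)) := by rw [hD]; ring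
      _ = (N.choose (S - 1) * (S - 1)) * (N - (S - 1)) := by rw [h1]
      _ = (N.choose (S - 1) * (N - (S - 1))) * (S - 1) := by ring
      _ = B * S * (S - 1) := by rw [← h2]
  have hD4 : N * N ≤ 4 * D := by
    have d1 : N ≤ 2 * (N - (S - 2)) := by omega
    have d2 : N ≤ 2 * (N - (S - 1)) := by omega
    calc N * N ≤ (2 * (N - (S - 2))) * (2 * (N - (S - 1))) := Nat.mul_le_mul d1 d2
      _ = 4 * D := by rw [hD]; ring
  -- the key natural number inequality
  have hkey : q ^ K * Bad ≤ 2 ^ (k + 2) * q ^ bb * S ^ 2 * B := by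
    have step1 : N * (N * Bad) ≤ N * (4 * (2 ^ k * q ^ bb) * S ^ 2 * B) := by
      calc N * (N * Bad) = N * N * Bad := by ring
        _ ≤ 4 * D * Bad := Nat.mul_le_mul_right _ hD4
        _ ≤ 4 * D * (P * C2) := Nat.mul_le_mul_left _ hBadLe
        _ = 4 * P * (C2 * D) := by ring
        _ = 4 * P * (B * S * (S - 1)) := by rw [hchoose]
        _ ≤ 4 * P * (B * S * S) := by
            refine Nat.mul_le_mul_left _ ?_
            exact Nat.mul_le_mul_left _ (by omega)
        _ ≤ 4 * (N * (2 ^ k * q ^ bb)) * (B * S * S) :=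
            Nat.mul_le_mul_right _ (Nat.mul_le_mul_left _ hPle)
        _ = N * (4 * (2 ^ k * q ^ bb) * S ^ 2 * B) := by ring
    have step2 : N * Bad ≤ 4 * (2 ^ k * q ^ bb) * S ^ 2 * B :=
      Nat.le_of_mul_le_mul_left step1 hNpos
    calc q ^ K * Bad ≤ N * Bad := Nat.mul_le_mul_right _ hNq
      _ ≤ 4 * (2 ^ k * q ^ bb) * S ^ 2 * B := step2
      _ = 2 ^ (k + 2) * q ^ bb * S ^ 2 * B := by ring
  -- move to the reals
  have hBpos : 0 < B := Nat.choose_pos (by omega)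
  have hnum : Nat.card {C : Set T //
      (∀ X ∈ C, Module.finrank F ↥X = k) ∧ C.ncard = S ∧
      ∀ X ∈ C, ∀ Y ∈ C, X ≠ Y → d ≤ k - Module.finrank F ↥(X ⊓ Y)} = A :=
    Nat.card_congr (Equiv.subtypeEquivRight fun C => Iff.rfl)
  have hden : Nat.card {C : Set T //
      (∀ X ∈ C, Module.finrank F ↥X = k) ∧ C.ncard = S} = B := by
    rw [hB, hN, ← card_codes G S]
    exact Nat.card_congr (Equiv.subtypeEquivRight fun C => Iff.rfl)
  have hdensity : densityI F n k S d = (A : ℝ) / (B : ℝ) := by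
    rw [densityI, hnum, hden]
  have hABr : (A : ℝ) = (B : ℝ) - (Bad : ℝ) := by
    have := congrArg (fun x : ℕ => (x : ℝ)) hAB
    push_cast at this
    linarith
  have hBr : (0 : ℝ) < (B : ℝ) := by exact_mod_cast hBpos
  have habs : |densityI F n k S d - 1| = (Bad : ℝ) / (B : ℝ) := by
    rw [hdensity, hABr]
    rw [abs_of_nonpos]
    · field_simp
      ring
    · have hBadB : (Bad : ℝ) ≤ (B : ℝ) := by
        exact_mod_cast le_trans (Nat.le_add_left _ _) (le_of_eq hAB)
      rw [sub_div, div_self (ne_of_gt hBr)]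
      have : (0:ℝ) ≤ (Bad : ℝ) / (B : ℝ) := by positivity
      linarith
  rw [habs]
  -- final division
  have hqK : (0 : ℝ) < (q : ℝ) ^ K := by positivity
  rw [div_le_div_iff₀ hBr hqK]
  have := congrArg (fun x : ℕ => (x : ℝ)) (rfl : q ^ K * Bad = q ^ K * Bad)
  have hkeyr : ((q : ℝ) ^ K) * (Bad : ℝ) ≤ 2 ^ (k + 2) * (q : ℝ) ^ bb * (S : ℝ) ^ 2 * (B : ℝ) := by
    exact_mod_cast hkey
  calc (Bad : ℝ) * (q : ℝ) ^ K = ((q : ℝ) ^ K) * (Bad : ℝ) := by ring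
    _ ≤ 2 ^ (k + 2) * (q : ℝ) ^ bb * (S : ℝ) ^ 2 * (B : ℝ) := hkeyr
    _ = 2 ^ (k + 2) * (q : ℝ) ^ ((d - 1) * (n - (d - 1))) * (S : ℝ) ^ 2 * (B : ℝ) := by
        rw [hbb, hb]

end PerField

/-- If `S_q ∈ o(q^{(k(n-k) - (d-1)(n-d+1))/2})` as `q → ∞` through prime
powers, then the density of subspace codes in `G_q(k,n)` of cardinality `S_q` and minimum
injection distance at least `d` tends to 1. -/
theorem stmt_16 (n k d : ℕ) (hd : 2 ≤ d) (hdk : d ≤ k) (hk : k ≤ n - k)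
    (S : ℕ → ℕ) (hS : ∀ q, 2 ≤ S q)
    (hlo : (fun q => (S q : ℝ)) =o[primePowFilter]
      fun q => (q : ℝ) ^ ((((k * (n - k) : ℕ) : ℝ) - (((d - 1) * (n - d + 1) : ℕ) : ℝ)) / 2)) :
    ∀ ε > (0 : ℝ), ∀ᶠ q in primePowFilter,
      ∀ (F : Type) [Field F] [Fintype F],
        Fintype.card F = q → |densityI F n k (S q) d - 1| < ε := by
  intro ε hε
  have hkn : k ≤ n := by omega
  set Kn : ℕ := k * (n - k) with hKn
  set bn : ℕ := (d - 1) * (n - d + 1) with hbn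
  have hKn4 : 4 ≤ Kn := by
    have h1 : 2 ≤ k := by omega
    have h2 : 2 ≤ n - k := by omega
    calc 4 = 2 * 2 := rfl
      _ ≤ k * (n - k) := Nat.mul_le_mul h1 h2
  have hbnKn : bn < Kn := by
    rw [hbn, hKn]
    zify [show k ≤ n from hkn, show 1 ≤ d by omega, show d ≤ n by omega]
    have h1 : (1 : ℤ) ≤ (k : ℤ) - ((d : ℤ) - 1) := by push_cast; omega
    have h2 : (1 : ℤ) ≤ (n : ℤ) - ((d : ℤ) - 1) - k := by push_cast; omega
    nlinarith [mul_le_mul h1 h2 (by norm_num) (by linarith)]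
  set er : ℝ := (((Kn : ℕ) : ℝ) - ((bn : ℕ) : ℝ)) / 2 with her
  -- choose δ
  set δ : ℝ := min 1 (Real.sqrt (ε / 2 ^ (k + 3))) with hδ
  have hδpos : 0 < δ := lt_min one_pos (Real.sqrt_pos.2 (by positivity))
  have hδ1 : δ ≤ 1 := min_le_left _ _
  have hδsq : 2 ^ (k + 2) * δ ^ 2 < ε := by
    have h1 : δ ^ 2 ≤ ε / 2 ^ (k + 3) := by
      have h2 : δ ≤ Real.sqrt (ε / 2 ^ (k + 3)) := min_le_right _ _
      have h3 : δ ^ 2 ≤ Real.sqrt (ε / 2 ^ (k + 3)) ^ 2 := by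
        exact pow_le_pow_left₀ (le_of_lt hδpos) h2 2
      rwa [Real.sq_sqrt (by positivity)] at h3
    have : 2 ^ (k + 2) * δ ^ 2 ≤ 2 ^ (k + 2) * (ε / 2 ^ (k + 3)) := by
      exact mul_le_mul_of_nonneg_left h1 (by positivity)
    have heq : (2 : ℝ) ^ (k + 2) * (ε / 2 ^ (k + 3)) = ε / 2 := by
      rw [pow_succ]
      field_simp
      ring
    rw [heq] at this
    linarith
  have hev1 := hlo.def hδpos
  have hev2 : ∀ᶠ q in primePowFilter, IsPrimePow q := by
    show ∀ᶠ q in Filter.atTop ⊓ Filter.principal {q | IsPrimePow q}, IsPrimePow q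
    rw [Filter.eventually_inf_principal]
    exact Filter.Eventually.of_forall fun q hq => hq
  filter_upwards [hev1, hev2] with q hq1 hqpp
  intro F _ _ hcard
  have hq2 : 2 ≤ q := hqpp.two_le
  have hq2r : (2 : ℝ) ≤ (q : ℝ) := by exact_mod_cast hq2
  have hq1r : (1 : ℝ) ≤ (q : ℝ) := by linarith
  have hqpos : (0 : ℝ) < (q : ℝ) := by linarith
  -- norms
  have hSq : (S q : ℝ) ≤ δ * (q : ℝ) ^ er := by
    have := hq1
    rwa [Real.norm_natCast, Real.norm_eq_abs, abs_of_nonneg (Real.rpow_nonneg hqpos.le _)]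
      at this
  have hqe_nonneg : (0 : ℝ) ≤ (q : ℝ) ^ er := Real.rpow_nonneg hqpos.le _
  -- 2 * S q ≤ N
  have herK : er ≤ (Kn : ℝ) - 1 := by
    rw [her]
    have : ((bn : ℕ) : ℝ) ≥ 0 := Nat.cast_nonneg _
    have hK4 : (4 : ℝ) ≤ (Kn : ℝ) := by exact_mod_cast hKn4
    linarith
  have hqe_le : (q : ℝ) ^ er ≤ (q : ℝ) ^ (Kn - 1 : ℕ) := by
    calc (q : ℝ) ^ er ≤ (q : ℝ) ^ (((Kn - 1 : ℕ) : ℝ)) := by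
          refine Real.rpow_le_rpow_of_exponent_le hq1r ?_
          have : ((Kn - 1 : ℕ) : ℝ) = (Kn : ℝ) - 1 := by
            have : 1 ≤ Kn := by omega
            push_cast [this]
            ring
          rw [this]
          exact herK
      _ = (q : ℝ) ^ (Kn - 1 : ℕ) := Real.rpow_natCast _ _
  have hN := ncard_G_lower F n k hkn
  rw [hcard] at hN
  have hNr : ((q : ℝ)) ^ (Kn : ℕ) ≤
      (({X : Submodule F (Fin n → F) | Module.finrank F ↥X = k}).ncard : ℝ) := by
    exact_mod_cast hN
  have h2S : 2 * S q ≤ ({X : Submodule F (Fin n → F) | Module.finrank F ↥X = k}).ncard := by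
    have hr : (2 * S q : ℝ) ≤
        (({X : Submodule F (Fin n → F) | Module.finrank F ↥X = k}).ncard : ℝ) := by
      calc (2 * S q : ℝ) ≤ 2 * (δ * (q : ℝ) ^ er) := by
            push_cast
            nlinarith [hSq]
        _ ≤ 2 * (q : ℝ) ^ er := by nlinarith [hqe_nonneg, hδ1, hδpos]
        _ ≤ 2 * (q : ℝ) ^ (Kn - 1 : ℕ) := by nlinarith [hqe_le]
        _ ≤ (q : ℝ) * (q : ℝ) ^ (Kn - 1 : ℕ) := by
            have : (0:ℝ) ≤ (q : ℝ) ^ (Kn - 1 : ℕ) := by positivity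
            nlinarith
        _ = (q : ℝ) ^ (Kn : ℕ) := by
            rw [← pow_succ']
            congr 1
            omega
        _ ≤ _ := hNr
    exact_mod_cast hr
  -- apply the main bound
  have hmb := main_bound F n k d hd hdk hk (S q) (hS q) h2S
  rw [hcard] at hmb
  have hexp : (d - 1) * (n - (d - 1)) = bn := by
    rw [hbn]
    congr 1
    omega
  rw [hexp] at hmb
  refine lt_of_le_of_lt hmb ?_
  -- final computation
  have hSsq : (S q : ℝ) ^ 2 ≤ δ ^ 2 * ((q : ℝ) ^ er) ^ 2 := by
    have := pow_le_pow_left₀ (by positivity : (0:ℝ) ≤ (S q : ℝ)) hSq 2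
    rwa [mul_pow] at this
  have hq2e : ((q : ℝ) ^ er) ^ 2 = (q : ℝ) ^ ((Kn - bn : ℕ)) := by
    rw [← Real.rpow_natCast ((q:ℝ)) (Kn - bn), ← Real.rpow_natCast ((q:ℝ)^er) 2,
      ← Real.rpow_mul hqpos.le]
    congr 1
    rw [her]
    have : ((Kn - bn : ℕ) : ℝ) = (Kn : ℝ) - (bn : ℝ) := by
      have : bn ≤ Kn := le_of_lt hbnKn
      push_cast [this]
      ring
    rw [this]
    push_cast
    ring
  have hfinal : 2 ^ (k + 2) * (q : ℝ) ^ bn * (S q : ℝ) ^ 2 / (q : ℝ) ^ Kn ≤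
      2 ^ (k + 2) * δ ^ 2 := by
    have hqbn : (0:ℝ) < (q : ℝ) ^ bn := by positivity
    have hqKn : (0:ℝ) < (q : ℝ) ^ Kn := by positivity
    rw [div_le_iff₀ hqKn]
    calc 2 ^ (k + 2) * (q : ℝ) ^ bn * (S q : ℝ) ^ 2
        ≤ 2 ^ (k + 2) * (q : ℝ) ^ bn * (δ ^ 2 * ((q : ℝ) ^ er) ^ 2) := by
          refine mul_le_mul_of_nonneg_left ?_ (by positivity)
          exact hSsq
      _ = 2 ^ (k + 2) * δ ^ 2 * ((q : ℝ) ^ bn * ((q : ℝ) ^ er) ^ 2) := by ring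
      _ = 2 ^ (k + 2) * δ ^ 2 * ((q : ℝ) ^ bn * (q : ℝ) ^ (Kn - bn : ℕ)) := by rw [hq2e]
      _ = 2 ^ (k + 2) * δ ^ 2 * (q : ℝ) ^ Kn := by
          rw [← pow_add]
          congr 2
          omega
  exact lt_of_le_of_lt hfinal hδsq
end Aux
end
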